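/- arXiv:2110.05025 — 7 statements merged into one kernel-verified Lean document; each statement's English description precedes it below -/
import Mathlib

section
/- Let $d \ge 2$, let $e_1, e_2 \in \mathbb{R}^d$ be orthonormal vectors, let $w_1, w_2, w_3 \in \mathbb{R}^d$, and let $0 \le \varepsilon \le 1/10$. Suppose that $\|w_1\|_2^2 + \|w_2\|_2^2 + \|w_3\|_2^2 \le 2 + \varepsilon$, that $\langle w_1 - w_3, e_1 \rangle \ge 1 - \varepsilon$, and that $\langle w_3 - w_2, e_1 \rangle \ge 1 - \varepsilon$. Then $\langle w_1, e_2 \rangle^2 + \langle w_2, e_2 \rangle^2 + \langle w_3, e_2 \rangle^2 \le 5\varepsilon$; in particular $|\langle w_i, e_2 \rangle| \le \sqrt{5\varepsilon}$ for each $i \in \{1,2,3\}$. -/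
open scoped RealInnerProductSpace

lemma bessel2 {d : ℕ} (e₁ e₂ w : EuclideanSpace ℝ (Fin d))
    (he₁ : ‖e₁‖ = 1) (he₂ : ‖e₂‖ = 1) (he₁₂ : ⟪e₁, e₂⟫ = 0) :
    ⟪w, e₁⟫ ^ 2 + ⟪w, e₂⟫ ^ 2 ≤ ‖w‖ ^ 2 := by
  have h : (0:ℝ) ≤ ‖w - ⟪w, e₁⟫ • e₁ - ⟪w, e₂⟫ • e₂‖ ^ 2 := by positivity
  have hexp : ‖w - ⟪w, e₁⟫ • e₁ - ⟪w, e₂⟫ • e₂‖ ^ 2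
      = ⟪w - ⟪w, e₁⟫ • e₁ - ⟪w, e₂⟫ • e₂, w - ⟪w, e₁⟫ • e₁ - ⟪w, e₂⟫ • e₂⟫ := by
    rw [real_inner_self_eq_norm_sq]
  have h1 : ⟪e₁, e₁⟫ = (1:ℝ) := by
    rw [real_inner_self_eq_norm_sq, he₁]; norm_num
  have h2 : ⟪e₂, e₂⟫ = (1:ℝ) := by
    rw [real_inner_self_eq_norm_sq, he₂]; norm_num
  have h21 : ⟪e₂, e₁⟫ = (0:ℝ) := by rw [real_inner_comm]; exact he₁₂
  have hw : ⟪w, w⟫ = ‖w‖ ^ 2 := real_inner_self_eq_norm_sq w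
  rw [hexp] at h
  simp only [inner_sub_left, inner_sub_right, real_inner_smul_left, real_inner_smul_right,
    h1, h2, he₁₂, h21, hw, real_inner_comm e₁ w, real_inner_comm e₂ w] at h
  rw [show ⟪w, e₁⟫ = ⟪e₁, w⟫ from real_inner_comm e₁ w, show ⟪w, e₂⟫ = ⟪e₂, w⟫ from real_inner_comm e₂ w]
  nlinarith [h]

/-- Deterministic core of the supervised-learning part of Theorem 1:
a near-minimal-norm linear classifier whose difference vectors `w₁ - w₃` and
`w₃ - w₂` correlate strongly with `e₁` has almost no correlation with `e₂`. -/
theorem stmt_0 (d : ℕ) (hd : 2 ≤ d)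
    (e₁ e₂ w₁ w₂ w₃ : EuclideanSpace ℝ (Fin d))
    (he₁ : ‖e₁‖ = 1) (he₂ : ‖e₂‖ = 1) (he₁₂ : ⟪e₁, e₂⟫ = 0)
    (ε : ℝ) (hε0 : 0 ≤ ε) (hε1 : ε ≤ 1 / 10)
    (hnorm : ‖w₁‖ ^ 2 + ‖w₂‖ ^ 2 + ‖w₃‖ ^ 2 ≤ 2 + ε)
    (h13 : ⟪w₁ - w₃, e₁⟫ ≥ 1 - ε)
    (h32 : ⟪w₃ - w₂, e₁⟫ ≥ 1 - ε) :
    ⟪w₁, e₂⟫ ^ 2 + ⟪w₂, e₂⟫ ^ 2 + ⟪w₃, e₂⟫ ^ 2 ≤ 5 * ε ∧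
      |⟪w₁, e₂⟫| ≤ Real.sqrt (5 * ε) ∧
      |⟪w₂, e₂⟫| ≤ Real.sqrt (5 * ε) ∧
      |⟪w₃, e₂⟫| ≤ Real.sqrt (5 * ε) := by
  have b1 := bessel2 e₁ e₂ w₁ he₁ he₂ he₁₂
  have b2 := bessel2 e₁ e₂ w₂ he₁ he₂ he₁₂
  have b3 := bessel2 e₁ e₂ w₃ he₁ he₂ he₁₂
  rw [inner_sub_left] at h13 h32
  set a₁ := ⟪w₁, e₁⟫
  set a₂ := ⟪w₂, e₁⟫
  set a₃ := ⟪w₃, e₁⟫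
  have key : ⟪w₁, e₂⟫ ^ 2 + ⟪w₂, e₂⟫ ^ 2 + ⟪w₃, e₂⟫ ^ 2 ≤ 5 * ε := by
    nlinarith [sq_nonneg (a₁ + a₂ + a₃), sq_nonneg (a₁ - a₃ - (1 - ε)),
      sq_nonneg (a₃ - a₂ - (1 - ε)), sq_nonneg ε,
      mul_nonneg (sub_nonneg.2 h13) (sub_nonneg.2 h32)]
  refine ⟨key, ?_, ?_, ?_⟩ <;>
  · rw [← Real.sqrt_sq_eq_abs]
    apply Real.sqrt_le_sqrt
    nlinarith [sq_nonneg (⟪w₁, e₂⟫ : ℝ), sq_nonneg (⟪w₂, e₂⟫ : ℝ), sq_nonneg (⟪w₃, e₂⟫ : ℝ)]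
end

section
/- Let $d \ge 2$ and let $M$ be a real symmetric positive semidefinite $d \times d$ matrix. Let $e \in \mathbb{R}^d$ be a unit vector and let $A > B > 0$ be real numbers such that $e^{\top} M e \ge A$ and such that $u^{\top} M u \le B \|u\|_2^2$ for every $u \in \mathbb{R}^d$ with $\langle u, e \rangle = 0$. Then there exists a unit vector $v \in \mathbb{R}^d$ with $M v = \lambda_{\max}(M) \, v$ (where $\lambda_{\max}(M)$ is the largest eigenvalue of $M$) such that $\langle e, v \rangle^2 \ge 1 - \sqrt{B/A}$. -/
open Matrix

/-- Deterministic core of the self-supervised-learning part of Theorem 1: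
if a symmetric PSD matrix has large Rayleigh quotient in the direction `e` but
uniformly small Rayleigh quotients on the orthogonal complement of `e`, then its
top eigenvector is almost aligned with `e`. -/
theorem stmt_1 (d : ℕ) (hd : 2 ≤ d) (M : Matrix (Fin d) (Fin d) ℝ)
    (hM : M.PosSemidef) (e : Fin d → ℝ) (he : e ⬝ᵥ e = 1)
    (A B : ℝ) (hB : 0 < B) (hBA : B < A)
    (hA : A ≤ e ⬝ᵥ M.mulVec e)
    (hB' : ∀ u : Fin d → ℝ, u ⬝ᵥ e = 0 → u ⬝ᵥ M.mulVec u ≤ B * (u ⬝ᵥ u)) :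
    ∃ (v : Fin d → ℝ) (lam : ℝ), v ⬝ᵥ v = 1 ∧ M.mulVec v = lam • v ∧
      (∀ (μ : ℝ) (w : Fin d → ℝ), w ≠ 0 → M.mulVec w = μ • w → μ ≤ lam) ∧
      (e ⬝ᵥ v) ^ 2 ≥ 1 - Real.sqrt (B / A) := by
  have hHerm : M.IsHermitian := hM.1
  have hd0 : Nonempty (Fin d) := ⟨⟨0, by omega⟩⟩
  obtain ⟨i0, -, hmax⟩ := Finset.exists_max_image (Finset.univ : Finset (Fin d))
    hHerm.eigenvalues ⟨Classical.arbitrary _, Finset.mem_univ _⟩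
  set lam := hHerm.eigenvalues i0 with hlam
  set b := hHerm.eigenvectorBasis with hb
  set v : Fin d → ℝ := ⇑(b i0) with hv
  -- dot product equals inner product on EuclideanSpace
  have hdp : ∀ x y : EuclideanSpace ℝ (Fin d), (inner ℝ x y : ℝ) = (x : Fin d → ℝ) ⬝ᵥ y := by
    intro x y
    simp [PiLp.inner_apply, dotProduct, mul_comm]
  -- symmetry
  have hsymm : ∀ x y : Fin d → ℝ, x ⬝ᵥ M.mulVec y = (M.mulVec x) ⬝ᵥ y := by
    intro x y
    rw [Matrix.dotProduct_mulVec, ← Matrix.mulVec_transpose]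
    have : Mᵀ = M := by
      have := hHerm
      simpa [Matrix.IsHermitian, Matrix.conjTranspose_eq_transpose_of_trivial] using this
    rw [this]
  -- Rayleigh bound
  have hRay : ∀ w : Fin d → ℝ, w ⬝ᵥ M.mulVec w ≤ lam * (w ⬝ᵥ w) := by
    intro w
    have h1 : ∀ y : Fin d → ℝ, w ⬝ᵥ y = ∑ i, ((w : Fin d → ℝ) ⬝ᵥ ⇑(b i)) * (⇑(b i) ⬝ᵥ y) := by
      intro y
      have := b.sum_inner_mul_inner (𝕜 := ℝ) (WithLp.toLp 2 w : EuclideanSpace ℝ (Fin d)) (WithLp.toLp 2 y : EuclideanSpace ℝ (Fin d))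
      simp only [hdp, WithLp.ofLp_toLp] at this
      exact this.symm
    have hMw : ∀ i, (⇑(b i) : Fin d → ℝ) ⬝ᵥ M.mulVec w = hHerm.eigenvalues i * (⇑(b i) ⬝ᵥ w) := by
      intro i
      rw [hsymm, hHerm.mulVec_eigenvectorBasis i, smul_dotProduct]
      rfl
    rw [h1 (M.mulVec w), h1 w, Finset.mul_sum]
    apply Finset.sum_le_sum
    intro i _
    rw [hMw i]
    have hcomm : (w ⬝ᵥ ⇑(b i)) = (⇑(b i) ⬝ᵥ w) := dotProduct_comm _ _
    rw [hcomm]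
    have := hmax i (Finset.mem_univ i)
    nlinarith [sq_nonneg ((⇑(b i) : Fin d → ℝ) ⬝ᵥ w)]
  have hv1 : v ⬝ᵥ v = 1 := by
    have := b.orthonormal.1 i0
    have h2 : (inner ℝ (b i0) (b i0) : ℝ) = 1 := by
      rw [real_inner_self_eq_norm_sq, this]; norm_num
    rw [hdp] at h2
    exact h2
  have hMv : M.mulVec v = lam • v := hHerm.mulVec_eigenvectorBasis i0
  set α := e ⬝ᵥ M.mulVec e with hα
  have hαlam : α ≤ lam := by
    have := hRay e
    rw [he] at this
    simpa using this
  have hAlam : A ≤ lam := le_trans hA hαlam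
  set c := e ⬝ᵥ v with hc
  have hvc : v ⬝ᵥ e = c := dotProduct_comm _ _
  have heMv : e ⬝ᵥ M.mulVec v = lam * c := by
    rw [hMv, dotProduct_smul]; rfl
  have hvMe : v ⬝ᵥ M.mulVec e = lam * c := by
    rw [hsymm, hMv, smul_dotProduct, hvc]; rfl
  have hvMv : v ⬝ᵥ M.mulVec v = lam := by
    rw [hMv, dotProduct_smul, hv1]; simp
  -- (iv): lam * c^2 ≤ α, via w = e - c • v
  have hiv : lam * c ^ 2 ≤ α := by
    have hpsd := hM.dotProduct_mulVec_nonneg (e - c • v)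
    have hexp : (e - c • v) ⬝ᵥ M.mulVec (e - c • v) = α - lam * c ^ 2 := by
      rw [Matrix.mulVec_sub, Matrix.mulVec_smul]
      simp only [dotProduct_sub, sub_dotProduct, dotProduct_smul,
        smul_dotProduct, heMv, hvMe, hvMv, smul_eq_mul]
      ring
    have : star (e - c • v) = e - c • v := by simp
    rw [this] at hpsd
    rw [hexp] at hpsd
    linarith
  -- (iii): lam * (1 - 2c^2) + c^2 * α ≤ B * (1 - c^2), via u = v - c • e
  have hue : (v - c • e) ⬝ᵥ e = 0 := by
    simp [sub_dotProduct, smul_dotProduct, hvc, he]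
  have hiii : lam * (1 - 2 * c ^ 2) + c ^ 2 * α ≤ B * (1 - c ^ 2) := by
    have h := hB' (v - c • e) hue
    have hexp : (v - c • e) ⬝ᵥ M.mulVec (v - c • e) = lam * (1 - 2 * c ^ 2) + c ^ 2 * α := by
      rw [Matrix.mulVec_sub, Matrix.mulVec_smul]
      simp only [dotProduct_sub, sub_dotProduct, dotProduct_smul,
        smul_dotProduct, heMv, hvMe, hvMv, smul_eq_mul]
      ring
    have hnorm : (v - c • e) ⬝ᵥ (v - c • e) = 1 - c ^ 2 := by
      simp only [dotProduct_sub, sub_dotProduct, dotProduct_smul,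
        smul_dotProduct, hv1, he, hvc, smul_eq_mul]
      have : e ⬝ᵥ v = c := rfl
      rw [this]; ring
    rw [hexp, hnorm] at h
    exact h
  have hlampos : 0 < lam := lt_of_lt_of_le (lt_trans hB hBA) hAlam
  have hc2le1 : c ^ 2 ≤ 1 := by nlinarith
  -- key: A * (1 - c^2)^2 ≤ B
  have hkey : (1 - c ^ 2) ^ 2 ≤ B / A := by
    rw [le_div_iff₀ (by linarith)]
    nlinarith [sq_nonneg c, sq_nonneg (1 - c^2)]
  have hfinal : 1 - c ^ 2 ≤ Real.sqrt (B / A) := by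
    have := Real.sqrt_le_sqrt hkey
    rwa [Real.sqrt_sq (by linarith)] at this
  exact ⟨v, lam, hv1, hMv, fun μ w hw hMw => by
    have h1 := hRay w
    rw [hMw, dotProduct_smul, smul_eq_mul] at h1
    have hww : 0 < w ⬝ᵥ w := by
      have h0 : 0 ≤ w ⬝ᵥ w := by
        simpa [dotProduct] using
          Finset.sum_nonneg (fun i _ => mul_self_nonneg (w i))
      rcases h0.lt_or_eq with h | h
      · exact h
      · exact absurd ((dotProduct_self_eq_zero).mp h.symm) hw
    exact le_of_mul_le_mul_right h1 hww, by linarith⟩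
end

section
/- There exists $d_0 \in \mathbb{N}$ such that for every integer $d \ge d_0$ the following holds. Set $\rho = d^{-1/5}$ and $\tau = d^{1/5}$, and let $e_1, e_2 \in \mathbb{R}^d$ be orthonormal. Let $n_1, n_2 \ge 1$ and $1 \le n_3 \le d^{1/5}$, and consider a dataset consisting of: class-1 points $x_i^{(1)} = e_1 - q_i^{(1)} \tau e_2 + \rho \xi_i^{(1)}$ for $i \in [n_1]$ with $q_i^{(1)} \in \{0,1\}$; class-2 points $x_i^{(2)} = -e_1 - q_i^{(2)} \tau e_2 + \rho \xi_i^{(2)}$ for $i \in [n_2]$ with $q_i^{(2)} \in \{0,1\}$; and class-3 points $x_i^{(3)} = e_2 + \rho \xi_i^{(3)}$ for $i \in [n_3]$. Suppose the noise vectors $\xi_i^{(k)} \in \mathbb{R}^d$ satisfy: $|\langle \xi_i^{(k)}, e_1 \rangle| \le d^{1/10}$, $|\langle \xi_i^{(k)}, e_2 \rangle| \le d^{1/10}$, and $|\|\xi_i^{(k)}\|_2^2 - d| \le 4 d^{3/4}$ for every $k \in [3]$, $i \in [n_k]$, and $|\langle \xi_i^{(k)}, \xi_j^{(l)} \rangle|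 \le 3 d^{3/5}$ for every two distinct index pairs $(k,i) \ne (l,j)$. Define $w_1^* = e_1$, $w_2^* = -e_1$, and $w_3^* = \frac{1}{\rho d} \sum_{i=1}^{n_3} \xi_i^{(3)}$. Then: (a) for every datapoint $x$ of class $y \in [3]$ and every $y' \ne y$, one has $\langle w_y^*, x \rangle - \langle w_{y'}^*, x \rangle \ge 1 - 10 d^{-1/10}$; and (b) $\|w_3^*\|_2^2 \le 5 d^{-2/5}$. -/
open Matrix

private lemma sum_dot' {n d : ℕ} (f : Fin n → Fin d → ℝ) (v : Fin d → ℝ) :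
    (∑ i, f i) ⬝ᵥ v = ∑ i, f i ⬝ᵥ v := by
  unfold dotProduct
  simp only [Finset.sum_apply, Finset.sum_mul]
  exact Finset.sum_comm

private lemma dot_sum' {n d : ℕ} (v : Fin d → ℝ) (f : Fin n → Fin d → ℝ) :
    v ⬝ᵥ (∑ i, f i) = ∑ i, v ⬝ᵥ f i := by
  unfold dotProduct
  simp only [Finset.sum_apply, Finset.mul_sum]
  exact Finset.sum_comm

set_option maxHeartbeats 1000000 in
/-- Deterministic version of Lemma 2: in the three-class toy data model, under the
high-probability conditions on the noise vectors, the constructed linear classifier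
`(w₁*, w₂*, w₃*)` classifies every datapoint with margin at least `1 - 10 d^{-1/10}`,
and `‖w₃*‖² ≤ 5 d^{-2/5}`. -/
theorem stmt_2 : ∃ d₀ : ℕ, ∀ d : ℕ, d₀ ≤ d →
    ∀ (ρ τ : ℝ), ρ = (d : ℝ) ^ (-(1 : ℝ) / 5) → τ = (d : ℝ) ^ ((1 : ℝ) / 5) →
    ∀ (e₁ e₂ : Fin d → ℝ), e₁ ⬝ᵥ e₁ = 1 → e₂ ⬝ᵥ e₂ = 1 → e₁ ⬝ᵥ e₂ = 0 →
    ∀ (n₁ n₂ n₃ : ℕ), 1 ≤ n₁ → 1 ≤ n₂ → 1 ≤ n₃ → (n₃ : ℝ) ≤ (d : ℝ) ^ ((1 : ℝ) / 5) →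
    ∀ (ξ : Fin n₁ ⊕ Fin n₂ ⊕ Fin n₃ → Fin d → ℝ)
      (q : Fin n₁ ⊕ Fin n₂ ⊕ Fin n₃ → ℝ)
      (x : Fin n₁ ⊕ Fin n₂ ⊕ Fin n₃ → Fin d → ℝ)
      (y : Fin n₁ ⊕ Fin n₂ ⊕ Fin n₃ → Fin 3)
      (w : Fin 3 → Fin d → ℝ),
    (∀ p, q p = 0 ∨ q p = 1) →
    -- class-1 points
    (∀ i : Fin n₁, y (Sum.inl i) = 0 ∧
      x (Sum.inl i) = e₁ - (q (Sum.inl i) * τ) • e₂ + ρ • ξ (Sum.inl i)) →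
    -- class-2 points
    (∀ i : Fin n₂, y (Sum.inr (Sum.inl i)) = 1 ∧
      x (Sum.inr (Sum.inl i)) =
        -e₁ - (q (Sum.inr (Sum.inl i)) * τ) • e₂ + ρ • ξ (Sum.inr (Sum.inl i))) →
    -- class-3 points
    (∀ i : Fin n₃, y (Sum.inr (Sum.inr i)) = 2 ∧
      x (Sum.inr (Sum.inr i)) = e₂ + ρ • ξ (Sum.inr (Sum.inr i))) →
    -- high-probability conditions on the noise vectors
    (∀ p, |ξ p ⬝ᵥ e₁| ≤ (d : ℝ) ^ ((1 : ℝ) / 10)) →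
    (∀ p, |ξ p ⬝ᵥ e₂| ≤ (d : ℝ) ^ ((1 : ℝ) / 10)) →
    (∀ p, |ξ p ⬝ᵥ ξ p - (d : ℝ)| ≤ 4 * (d : ℝ) ^ ((3 : ℝ) / 4)) →
    (∀ p p', p ≠ p' → |ξ p ⬝ᵥ ξ p'| ≤ 3 * (d : ℝ) ^ ((3 : ℝ) / 5)) →
    -- the constructed classifier
    w 0 = e₁ → w 1 = -e₁ →
    w 2 = (ρ * d)⁻¹ • ∑ i : Fin n₃, ξ (Sum.inr (Sum.inr i)) →
    -- conclusions
    (∀ p, ∀ y' : Fin 3, y' ≠ y p →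
        w (y p) ⬝ᵥ x p - w y' ⬝ᵥ x p ≥ 1 - 10 * (d : ℝ) ^ (-(1 : ℝ) / 10)) ∧
      w 2 ⬝ᵥ w 2 ≤ 5 * (d : ℝ) ^ (-(2 : ℝ) / 5) := by
  refine ⟨100, ?_⟩
  intro d hd ρ τ hρ hτ e₁ e₂ h11 h22 h12 n₁ n₂ n₃ hn1 hn2 hn3 hn3d
    ξ q x y w hq hcl1 hcl2 hcl3 hbe1 hbe2 hbsq hbcr hw0 hw1 hw2
  have hd' : (100:ℝ) ≤ (d:ℝ) := by exact_mod_cast hd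
  set D := (d:ℝ) with hDdef
  clear_value D
  have hD0 : (0:ℝ) < D := by linarith
  have hD1 : (1:ℝ) ≤ D := by linarith
  have hpos : ∀ a : ℝ, 0 < D ^ a := fun a => Real.rpow_pos_of_pos hD0 a
  have hle : ∀ {a b : ℝ}, a ≤ b → D ^ a ≤ D ^ b :=
    fun {a b} h => Real.rpow_le_rpow_of_exponent_le hD1 h
  have hmul : ∀ a b : ℝ, D ^ a * D ^ b = D ^ (a + b) :=
    fun a b => (Real.rpow_add hD0 a b).symm
  have hone : D ^ (1:ℝ) = D := Real.rpow_one D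
  have hρ0 : 0 < ρ := by rw [hρ]; exact hpos _
  have hτ0 : 0 < τ := by rw [hτ]; exact hpos _
  have hρD0 : 0 < ρ * D := mul_pos hρ0 hD0
  have hc0 : (0:ℝ) ≤ (ρ * D)⁻¹ := (inv_pos.mpr hρD0).le
  have hρe : ρ * D ^ ((1:ℝ)/10) = D ^ (-(1:ℝ)/10) := by rw [hρ, hmul]; norm_num
  have hεpos : 0 < D ^ (-(1:ℝ)/10) := hpos _
  have hρD : ρ * D = D ^ ((4:ℝ)/5) := by
    rw [hρ]; nth_rewrite 2 [← hone]; rw [hmul]; norm_num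
  have hcinv : (ρ * D)⁻¹ = D ^ (-(4:ℝ)/5) := by
    rw [hρD, ← Real.rpow_neg hD0.le]; norm_num
  have rhoabs : ∀ p, |ρ * (ξ p ⬝ᵥ e₁)| ≤ D ^ (-(1:ℝ)/10) := by
    intro p
    rw [abs_mul, abs_of_pos hρ0, ← hρe]
    exact mul_le_mul_of_nonneg_left (hbe1 p) hρ0.le
  have hw2dot : ∀ v : Fin d → ℝ,
      w 2 ⬝ᵥ v = (ρ * D)⁻¹ * ∑ i : Fin n₃, ξ (Sum.inr (Sum.inr i)) ⬝ᵥ v := by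
    intro v
    rw [hw2, smul_dotProduct, sum_dot', smul_eq_mul]
  have finCases3 : ∀ z : Fin 3, z = 0 ∨ z = 1 ∨ z = 2 := by decide
  -- bound for the summands of ⟨w₃*, x⟩ for class 1/2 points
  have termB : ∀ (k : Fin n₃) (p : Fin n₁ ⊕ Fin n₂ ⊕ Fin n₃) (s : ℝ),
      |s| = 1 → Sum.inr (Sum.inr k) ≠ p →
      x p = s • e₁ - (q p * τ) • e₂ + ρ • ξ p →
      |ξ (Sum.inr (Sum.inr k)) ⬝ᵥ x p| ≤ 5 * D ^ ((2:ℝ)/5) := by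
    intro k p s hs hne hxp
    have hqb : |q p| ≤ 1 := by rcases hq p with h | h <;> rw [h] <;> norm_num
    rw [hxp, dotProduct_add, dotProduct_sub, dotProduct_smul,
      dotProduct_smul, dotProduct_smul, smul_eq_mul, smul_eq_mul, smul_eq_mul]
    have e1b : |s * (ξ (Sum.inr (Sum.inr k)) ⬝ᵥ e₁)| ≤ D ^ ((1:ℝ)/10) := by
      rw [abs_mul, hs, one_mul]; exact hbe1 _
    have e2b : |q p * τ * (ξ (Sum.inr (Sum.inr k)) ⬝ᵥ e₂)| ≤ D ^ ((3:ℝ)/10) := by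
      rw [abs_mul, abs_mul, abs_of_pos hτ0]
      calc |q p| * τ * |ξ (Sum.inr (Sum.inr k)) ⬝ᵥ e₂|
          ≤ 1 * τ * D ^ ((1:ℝ)/10) := by
            apply mul_le_mul (mul_le_mul_of_nonneg_right hqb hτ0.le) (hbe2 _) (abs_nonneg _)
            positivity
        _ = D ^ ((3:ℝ)/10) := by rw [one_mul, hτ, hmul]; norm_num
    have e3b : |ρ * (ξ (Sum.inr (Sum.inr k)) ⬝ᵥ ξ p)| ≤ 3 * D ^ ((2:ℝ)/5) := by
      rw [abs_mul, abs_of_pos hρ0]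
      calc ρ * |ξ (Sum.inr (Sum.inr k)) ⬝ᵥ ξ p| ≤ ρ * (3 * D ^ ((3:ℝ)/5)) :=
            mul_le_mul_of_nonneg_left (hbcr _ _ hne) hρ0.le
        _ = 3 * D ^ ((2:ℝ)/5) := by rw [hρ, mul_left_comm, hmul]; norm_num
    have h110 : D ^ ((1:ℝ)/10) ≤ D ^ ((2:ℝ)/5) := hle (by norm_num)
    have h310 : D ^ ((3:ℝ)/10) ≤ D ^ ((2:ℝ)/5) := hle (by norm_num)
    refine le_trans (abs_add_le _ _) (le_trans (add_le_add_left (abs_sub _ _) _) ?_)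
    linarith
  -- |⟨w₃*, x⟩| is small for class 1/2 points
  have w2small : ∀ (p : Fin n₁ ⊕ Fin n₂ ⊕ Fin n₃),
      (∀ k : Fin n₃, |ξ (Sum.inr (Sum.inr k)) ⬝ᵥ x p| ≤ 5 * D ^ ((2:ℝ)/5)) →
      |w 2 ⬝ᵥ x p| ≤ 5 * D ^ (-(1:ℝ)/10) := by
    intro p hb
    rw [hw2dot, abs_mul, abs_of_pos (inv_pos.mpr hρD0)]
    have hsum : |∑ i : Fin n₃, ξ (Sum.inr (Sum.inr i)) ⬝ᵥ x p|
        ≤ (n₃:ℝ) * (5 * D ^ ((2:ℝ)/5)) := by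
      refine le_trans (Finset.abs_sum_le_sum_abs _ _) ?_
      have := Finset.sum_le_card_nsmul Finset.univ
        (fun i => |ξ (Sum.inr (Sum.inr i)) ⬝ᵥ x p|) (5 * D ^ ((2:ℝ)/5)) (fun i _ => hb i)
      simpa [nsmul_eq_mul] using this
    calc (ρ*D)⁻¹ * |∑ i : Fin n₃, ξ (Sum.inr (Sum.inr i)) ⬝ᵥ x p|
        ≤ (ρ*D)⁻¹ * ((n₃:ℝ) * (5 * D ^ ((2:ℝ)/5))) :=
          mul_le_mul_of_nonneg_left hsum hc0
      _ ≤ D ^ (-(4:ℝ)/5) * (D ^ ((1:ℝ)/5) * (5 * D ^ ((2:ℝ)/5))) := by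
          rw [hcinv]
          exact mul_le_mul_of_nonneg_left
            (mul_le_mul_of_nonneg_right hn3d (by positivity)) (hpos _).le
      _ = 5 * D ^ (-(1:ℝ)/5) := by
          have h1 : D ^ (-(4:ℝ)/5) * (D ^ ((1:ℝ)/5) * D ^ ((2:ℝ)/5)) = D ^ (-(1:ℝ)/5) := by
            rw [hmul, hmul]; norm_num
          linear_combination 5 * h1
      _ ≤ 5 * D ^ (-(1:ℝ)/10) := by
          have := hle (show (-(1:ℝ)/5) ≤ -(1:ℝ)/10 by norm_num); linarith
  -- ⟨w₃*, x⟩ is large for class 3 points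
  have w2big : ∀ j : Fin n₃, w 2 ⬝ᵥ x (Sum.inr (Sum.inr j)) ≥ 1 - 9 * D ^ (-(1:ℝ)/10) := by
    intro j
    obtain ⟨-, hxj⟩ := hcl3 j
    have hterm : ∀ i : Fin n₃, ξ (Sum.inr (Sum.inr i)) ⬝ᵥ x (Sum.inr (Sum.inr j)) =
        ξ (Sum.inr (Sum.inr i)) ⬝ᵥ e₂
          + ρ * (ξ (Sum.inr (Sum.inr i)) ⬝ᵥ ξ (Sum.inr (Sum.inr j))) := by
      intro i
      rw [hxj, dotProduct_add, dotProduct_smul, smul_eq_mul]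
    set B : ℝ := D ^ ((1:ℝ)/10) + 3 * ρ * D ^ ((3:ℝ)/5) with hB
    clear_value B
    have hB0 : 0 ≤ B := by rw [hB]; positivity
    have hj : ξ (Sum.inr (Sum.inr j)) ⬝ᵥ e₂
          + ρ * (ξ (Sum.inr (Sum.inr j)) ⬝ᵥ ξ (Sum.inr (Sum.inr j)))
        ≥ ρ * D - 4 * ρ * D ^ ((3:ℝ)/4) - D ^ ((1:ℝ)/10) := by
      obtain ⟨hl, -⟩ := abs_le.mp (hbsq (Sum.inr (Sum.inr j)))
      obtain ⟨hl2, -⟩ := abs_le.mp (hbe2 (Sum.inr (Sum.inr j)))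
      have hm := mul_le_mul_of_nonneg_left hl hρ0.le
      linarith only [hm, hl2]
    have herase : ∀ i ∈ Finset.univ.erase j,
        -B ≤ ξ (Sum.inr (Sum.inr i)) ⬝ᵥ e₂
          + ρ * (ξ (Sum.inr (Sum.inr i)) ⬝ᵥ ξ (Sum.inr (Sum.inr j))) := by
      intro i hi
      have hij : (Sum.inr (Sum.inr i) : Fin n₁ ⊕ Fin n₂ ⊕ Fin n₃) ≠ Sum.inr (Sum.inr j) := by
        have h' : i ≠ j := (Finset.mem_erase.mp hi).1
        simp [h']
      obtain ⟨hl1, -⟩ := abs_le.mp (hbe2 (Sum.inr (Sum.inr i)))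
      obtain ⟨hl2, -⟩ := abs_le.mp (hbcr _ _ hij)
      have hm := mul_le_mul_of_nonneg_left hl2 hρ0.le
      rw [hB]
      linarith only [hm, hl1]
    have hsum : ∑ i : Fin n₃, ξ (Sum.inr (Sum.inr i)) ⬝ᵥ x (Sum.inr (Sum.inr j))
        ≥ (ρ * D - 4 * ρ * D ^ ((3:ℝ)/4) - D ^ ((1:ℝ)/10)) - (n₃:ℝ) * B := by
      have hsplit : (∑ i ∈ Finset.univ.erase j,
              ξ (Sum.inr (Sum.inr i)) ⬝ᵥ x (Sum.inr (Sum.inr j)))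
            + ξ (Sum.inr (Sum.inr j)) ⬝ᵥ x (Sum.inr (Sum.inr j))
          = ∑ i : Fin n₃, ξ (Sum.inr (Sum.inr i)) ⬝ᵥ x (Sum.inr (Sum.inr j)) :=
        Finset.sum_erase_add Finset.univ _ (Finset.mem_univ j)
      have h1 : ∑ i ∈ Finset.univ.erase j, ξ (Sum.inr (Sum.inr i)) ⬝ᵥ x (Sum.inr (Sum.inr j))
          ≥ -((n₃:ℝ) * B) := by
        have h2 : ∑ _i ∈ Finset.univ.erase j, (-B) ≤
            ∑ i ∈ Finset.univ.erase j, ξ (Sum.inr (Sum.inr i)) ⬝ᵥ x (Sum.inr (Sum.inr j)) := by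
          refine Finset.sum_le_sum ?_
          intro i hi
          rw [hterm i]
          exact herase i hi
        rw [Finset.sum_const, nsmul_eq_mul] at h2
        have hcard : ((Finset.univ.erase j).card : ℝ) ≤ (n₃:ℝ) := by
          exact_mod_cast le_trans Finset.card_erase_le (by simp)
        have h4 : 0 ≤ ((n₃:ℝ) - ((Finset.univ.erase j).card : ℝ)) * B :=
          mul_nonneg (by linarith only [hcard]) hB0
        linarith only [h2, h4]
      have h5 : ξ (Sum.inr (Sum.inr j)) ⬝ᵥ x (Sum.inr (Sum.inr j))
          ≥ ρ * D - 4 * ρ * D ^ ((3:ℝ)/4) - D ^ ((1:ℝ)/10) := by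
        rw [hterm j]; exact hj
      rw [← hsplit]
      linarith only [h1, h5]
    rw [hw2dot]
    have hmono := mul_le_mul_of_nonneg_left hsum hc0
    have hLB' : (ρ * D - 4 * ρ * D ^ ((3:ℝ)/4) - D ^ ((1:ℝ)/10)) - (n₃:ℝ) * B
        ≥ (ρ * D - 4 * ρ * D ^ ((3:ℝ)/4) - D ^ ((1:ℝ)/10)) - D ^ ((1:ℝ)/5) * B := by
      have h4 : 0 ≤ (D ^ ((1:ℝ)/5) - (n₃:ℝ)) * B := mul_nonneg (by linarith [hn3d]) hB0
      linarith only [h4]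
    have hmono2 := mul_le_mul_of_nonneg_left hLB' hc0
    have hexact : (ρ*D)⁻¹ *
          ((ρ * D - 4 * ρ * D ^ ((3:ℝ)/4) - D ^ ((1:ℝ)/10)) - D ^ ((1:ℝ)/5) * B)
        = 1 - 4 * D ^ (-(1:ℝ)/4) - D ^ (-(7:ℝ)/10) - D ^ (-(1:ℝ)/2) - 3 * D ^ (-(1:ℝ)/5) := by
      rw [hB, hcinv, hρ]
      have f1 : D ^ (-(4:ℝ)/5) * (D ^ (-(1:ℝ)/5) * D) = 1 := by
        nth_rewrite 3 [← hone]
        rw [hmul, hmul]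
        norm_num
      have f2 : D ^ (-(4:ℝ)/5) * (D ^ (-(1:ℝ)/5) * D ^ ((3:ℝ)/4)) = D ^ (-(1:ℝ)/4) := by
        rw [hmul, hmul]; norm_num
      have f3 : D ^ (-(4:ℝ)/5) * D ^ ((1:ℝ)/10) = D ^ (-(7:ℝ)/10) := by
        rw [hmul]; norm_num
      have f4 : D ^ (-(4:ℝ)/5) * (D ^ ((1:ℝ)/5) * D ^ ((1:ℝ)/10)) = D ^ (-(1:ℝ)/2) := by
        rw [hmul, hmul]; norm_num
      have f5 : D ^ (-(4:ℝ)/5) * (D ^ ((1:ℝ)/5) * (D ^ (-(1:ℝ)/5) * D ^ ((3:ℝ)/5)))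
          = D ^ (-(1:ℝ)/5) := by
        rw [hmul, hmul, hmul]; norm_num
      linear_combination f1 - 4*f2 - f3 - f4 - 3*f5
    have h14 : D ^ (-(1:ℝ)/4) ≤ D ^ (-(1:ℝ)/10) := hle (by norm_num)
    have h710 : D ^ (-(7:ℝ)/10) ≤ D ^ (-(1:ℝ)/10) := hle (by norm_num)
    have h12' : D ^ (-(1:ℝ)/2) ≤ D ^ (-(1:ℝ)/10) := hle (by norm_num)
    have h15 : D ^ (-(1:ℝ)/5) ≤ D ^ (-(1:ℝ)/10) := hle (by norm_num)
    linarith only [hmono, hmono2, hexact, h14, h710, h12', h15]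
  refine ⟨?_, ?_⟩
  · -- margins
    intro p y' hy'
    rcases p with i | i | j
    · -- class 1
      obtain ⟨hy, hx⟩ := hcl1 i
      rw [hy] at hy' ⊢
      have hxp : x (Sum.inl i) = (1:ℝ) • e₁ - (q (Sum.inl i) * τ) • e₂ + ρ • ξ (Sum.inl i) := by
        rw [hx, one_smul]
      have hdote : e₁ ⬝ᵥ x (Sum.inl i) = 1 + ρ * (ξ (Sum.inl i) ⬝ᵥ e₁) := by
        rw [hx, dotProduct_add, dotProduct_sub, dotProduct_smul,
          dotProduct_smul, smul_eq_mul, smul_eq_mul, h11, h12,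
          dotProduct_comm e₁ (ξ (Sum.inl i))]
        ring
      obtain ⟨hρl, hρr⟩ := abs_le.mp (rhoabs (Sum.inl i))
      rcases finCases3 y' with h | h | h <;> subst h
      · exact absurd rfl hy'
      · rw [hw0, hw1, neg_dotProduct, hdote]
        linarith [hεpos]
      · have hb := w2small (Sum.inl i)
          (fun k => termB k (Sum.inl i) 1 (by norm_num) (by simp) hxp)
        obtain ⟨hbl, hbr⟩ := abs_le.mp hb
        rw [hw0, hdote]
        linarith [hεpos]
    · -- class 2
      obtain ⟨hy, hx⟩ := hcl2 i
      rw [hy] at hy' ⊢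
      have hxp : x (Sum.inr (Sum.inl i)) = (-1:ℝ) • e₁
          - (q (Sum.inr (Sum.inl i)) * τ) • e₂ + ρ • ξ (Sum.inr (Sum.inl i)) := by
        rw [hx, neg_one_smul]
      have hdote : e₁ ⬝ᵥ x (Sum.inr (Sum.inl i)) = -1 + ρ * (ξ (Sum.inr (Sum.inl i)) ⬝ᵥ e₁) := by
        rw [hx, dotProduct_add, dotProduct_sub, dotProduct_neg,
          dotProduct_smul, dotProduct_smul, smul_eq_mul, smul_eq_mul, h11, h12,
          dotProduct_comm e₁ (ξ (Sum.inr (Sum.inl i)))]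
        ring
      obtain ⟨hρl, hρr⟩ := abs_le.mp (rhoabs (Sum.inr (Sum.inl i)))
      rcases finCases3 y' with h | h | h <;> subst h
      · rw [hw0, hw1, neg_dotProduct, hdote]
        linarith [hεpos]
      · exact absurd rfl hy'
      · have hb := w2small (Sum.inr (Sum.inl i))
          (fun k => termB k (Sum.inr (Sum.inl i)) (-1) (by norm_num) (by simp) hxp)
        obtain ⟨hbl, hbr⟩ := abs_le.mp hb
        rw [hw1, neg_dotProduct, hdote]
        linarith [hεpos]
    · -- class 3
      obtain ⟨hy, hx⟩ := hcl3 j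
      rw [hy] at hy' ⊢
      have hdote : e₁ ⬝ᵥ x (Sum.inr (Sum.inr j)) = ρ * (ξ (Sum.inr (Sum.inr j)) ⬝ᵥ e₁) := by
        rw [hx, dotProduct_add, dotProduct_smul, smul_eq_mul, h12,
          dotProduct_comm e₁ (ξ (Sum.inr (Sum.inr j)))]
        ring
      obtain ⟨hρl, hρr⟩ := abs_le.mp (rhoabs (Sum.inr (Sum.inr j)))
      have hbig := w2big j
      rcases finCases3 y' with h | h | h <;> subst h
      · rw [hw0, hdote]; linarith
      · rw [hw1, neg_dotProduct, hdote]; linarith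
      · exact absurd rfl hy'
  · -- norm bound
    have hww : w 2 ⬝ᵥ w 2 = (ρ*D)⁻¹ * ∑ i : Fin n₃, ((ρ*D)⁻¹ *
        ∑ k : Fin n₃, ξ (Sum.inr (Sum.inr i)) ⬝ᵥ ξ (Sum.inr (Sum.inr k))) := by
      rw [hw2dot]
      congr 1
      refine Finset.sum_congr rfl fun i _ => ?_
      rw [hw2, dotProduct_smul, dot_sum', smul_eq_mul]
    have hinner : ∀ i : Fin n₃,
        ∑ k : Fin n₃, ξ (Sum.inr (Sum.inr i)) ⬝ᵥ ξ (Sum.inr (Sum.inr k))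
        ≤ (D + 4 * D ^ ((3:ℝ)/4)) + (n₃:ℝ) * (3 * D ^ ((3:ℝ)/5)) := by
      intro i
      have hsplit : (∑ k ∈ Finset.univ.erase i,
              ξ (Sum.inr (Sum.inr i)) ⬝ᵥ ξ (Sum.inr (Sum.inr k)))
            + ξ (Sum.inr (Sum.inr i)) ⬝ᵥ ξ (Sum.inr (Sum.inr i))
          = ∑ k : Fin n₃, ξ (Sum.inr (Sum.inr i)) ⬝ᵥ ξ (Sum.inr (Sum.inr k)) :=
        Finset.sum_erase_add Finset.univ _ (Finset.mem_univ i)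
      have hdiag : ξ (Sum.inr (Sum.inr i)) ⬝ᵥ ξ (Sum.inr (Sum.inr i))
          ≤ D + 4 * D ^ ((3:ℝ)/4) := by
        have := (abs_le.mp (hbsq (Sum.inr (Sum.inr i)))).2; linarith
      have hoff : ∑ k ∈ Finset.univ.erase i,
          ξ (Sum.inr (Sum.inr i)) ⬝ᵥ ξ (Sum.inr (Sum.inr k))
          ≤ (n₃:ℝ) * (3 * D ^ ((3:ℝ)/5)) := by
        have h2 : ∑ k ∈ Finset.univ.erase i,
            ξ (Sum.inr (Sum.inr i)) ⬝ᵥ ξ (Sum.inr (Sum.inr k))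
            ≤ ∑ _k ∈ Finset.univ.erase i, (3 * D ^ ((3:ℝ)/5)) := by
          refine Finset.sum_le_sum ?_
          intro k hk
          have hki : k ≠ i := (Finset.mem_erase.mp hk).1
          have hik : (Sum.inr (Sum.inr i) : Fin n₁ ⊕ Fin n₂ ⊕ Fin n₃)
              ≠ Sum.inr (Sum.inr k) := by simp [hki.symm]
          exact (abs_le.mp (hbcr _ _ hik)).2
        rw [Finset.sum_const, nsmul_eq_mul] at h2
        have hcard : ((Finset.univ.erase i).card : ℝ) ≤ (n₃:ℝ) := by
          exact_mod_cast le_trans Finset.card_erase_le (by simp)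
        have h4 : 0 ≤ ((n₃:ℝ) - ((Finset.univ.erase i).card : ℝ)) * (3 * D ^ ((3:ℝ)/5)) :=
          mul_nonneg (by linarith only [hcard]) (by positivity)
        linarith only [h2, h4]
      linarith only [hsplit, hdiag, hoff]
    have houter : ∀ i : Fin n₃, (ρ*D)⁻¹ *
        ∑ k : Fin n₃, ξ (Sum.inr (Sum.inr i)) ⬝ᵥ ξ (Sum.inr (Sum.inr k))
        ≤ (ρ*D)⁻¹ * ((D + 4 * D ^ ((3:ℝ)/4)) + D ^ ((1:ℝ)/5) * (3 * D ^ ((3:ℝ)/5))) := by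
      intro i
      refine mul_le_mul_of_nonneg_left ?_ hc0
      have hn3mul : (n₃:ℝ) * (3 * D ^ ((3:ℝ)/5)) ≤ D ^ ((1:ℝ)/5) * (3 * D ^ ((3:ℝ)/5)) :=
        mul_le_mul_of_nonneg_right hn3d (by positivity)
      linarith only [hinner i, hn3mul]
    set UB : ℝ := (ρ*D)⁻¹ * ((D + 4 * D ^ ((3:ℝ)/4)) + D ^ ((1:ℝ)/5) * (3 * D ^ ((3:ℝ)/5)))
      with hUB
    clear_value UB
    have hUB0 : 0 ≤ UB := by rw [hUB]; positivity
    have hsum2 : ∑ i : Fin n₃, ((ρ*D)⁻¹ *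
        ∑ k : Fin n₃, ξ (Sum.inr (Sum.inr i)) ⬝ᵥ ξ (Sum.inr (Sum.inr k))) ≤ (n₃:ℝ) * UB := by
      have := Finset.sum_le_card_nsmul Finset.univ
        (fun i => (ρ*D)⁻¹ * ∑ k : Fin n₃, ξ (Sum.inr (Sum.inr i)) ⬝ᵥ ξ (Sum.inr (Sum.inr k)))
        UB (fun i _ => houter i)
      simpa [nsmul_eq_mul] using this
    have hstep : (ρ*D)⁻¹ * (∑ i : Fin n₃, ((ρ*D)⁻¹ *
        ∑ k : Fin n₃, ξ (Sum.inr (Sum.inr i)) ⬝ᵥ ξ (Sum.inr (Sum.inr k))))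
        ≤ (ρ*D)⁻¹ * ((n₃:ℝ) * UB) := mul_le_mul_of_nonneg_left hsum2 hc0
    have hstep2 : (ρ*D)⁻¹ * ((n₃:ℝ) * UB) ≤ (ρ*D)⁻¹ * (D ^ ((1:ℝ)/5) * UB) :=
      mul_le_mul_of_nonneg_left (mul_le_mul_of_nonneg_right hn3d hUB0) hc0
    have hval : (ρ*D)⁻¹ * (D ^ ((1:ℝ)/5) * UB)
        = D ^ (-(2:ℝ)/5) + 4 * D ^ (-(13:ℝ)/20) + 3 * D ^ (-(3:ℝ)/5) := by
      rw [hUB, hcinv]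
      have f1 : D ^ (-(4:ℝ)/5) * (D ^ ((1:ℝ)/5) * (D ^ (-(4:ℝ)/5) * D)) = D ^ (-(2:ℝ)/5) := by
        nth_rewrite 4 [← hone]
        rw [hmul, hmul, hmul]
        norm_num
      have f2 : D ^ (-(4:ℝ)/5) * (D ^ ((1:ℝ)/5) * (D ^ (-(4:ℝ)/5) * D ^ ((3:ℝ)/4)))
          = D ^ (-(13:ℝ)/20) := by rw [hmul, hmul, hmul]; norm_num
      have f3 : D ^ (-(4:ℝ)/5) * (D ^ ((1:ℝ)/5) * (D ^ (-(4:ℝ)/5) *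
          (D ^ ((1:ℝ)/5) * D ^ ((3:ℝ)/5)))) = D ^ (-(3:ℝ)/5) := by
        rw [hmul, hmul, hmul, hmul]; norm_num
      linear_combination f1 + 4*f2 + 3*f3
    have h2le : (2:ℝ) ≤ D ^ ((1:ℝ)/5) := by
      have h32 : (32:ℝ) ≤ D := by linarith
      have h : (2:ℝ) = (32:ℝ) ^ ((1:ℝ)/5) := by
        rw [show (32:ℝ) = 2 ^ (5:ℕ) by norm_num, ← Real.rpow_natCast 2 5,
          ← Real.rpow_mul (by norm_num : (0:ℝ) ≤ 2)]
        norm_num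
      rw [h]
      exact Real.rpow_le_rpow (by norm_num) h32 (by norm_num)
    have hA : D ^ (-(13:ℝ)/20) ≤ D ^ (-(3:ℝ)/5) := hle (by norm_num)
    have hB2 : 2 * D ^ (-(3:ℝ)/5) ≤ D ^ (-(2:ℝ)/5) := by
      have hmm : D ^ (-(3:ℝ)/5) * D ^ ((1:ℝ)/5) = D ^ (-(2:ℝ)/5) := by rw [hmul]; norm_num
      have := mul_le_mul_of_nonneg_left h2le (hpos (-(3:ℝ)/5)).le
      linarith [this, hmm]
    have hpos25 := (hpos (-(2:ℝ)/5)).le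
    rw [hww]
    linarith only [hstep, hstep2, hval, hA, hB2, hpos25]
end

section
/- Let $d, k, n \ge 1$, let $x_1, \dots, x_n \in \mathbb{R}^d$, and set $M = \frac{1}{n} \sum_{i=1}^n x_i x_i^{\top}$. Let $\xi, \xi'$ be independent integrable random vectors in $\mathbb{R}^d$ with $\mathbb{E}[\xi] = \mathbb{E}[\xi'] = 0$. Then for every matrix $W \in \mathbb{R}^{k \times d}$, $- \frac{1}{n} \sum_{i=1}^n \mathbb{E}\big[ \langle W(x_i + \xi), \, W(x_i + \xi') \rangle \big] + \frac{1}{2} \| W^{\top} W \|_F^2 \;=\; \frac{1}{2} \| W^{\top} W - M \|_F^2 - \frac{1}{2} \| M \|_F^2$. In particular, the self-supervised objective on the left-hand side has the same set of minimizers over $W \in \mathbb{R}^{k \times d}$ as the matrix-factorization objective $\| M - W^{\top} W \|_F^2$. -/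
open Matrix MeasureTheory ProbabilityTheory

/-- The squared Frobenius norm of a real matrix. -/
noncomputable def frobSq {m n : ℕ} (A : Matrix (Fin m) (Fin n) ℝ) : ℝ :=
  ∑ i, ∑ j, (A i j) ^ 2

section Aux
variable {d k : ℕ} {Ω : Type*} [MeasurableSpace Ω] {μ : Measure Ω} [IsProbabilityMeasure μ]

/-- continuous linear map v ↦ (W.mulVec v) j -/
noncomputable def rowCLM (W : Matrix (Fin k) (Fin d) ℝ) (j : Fin k) :
    (Fin d → ℝ) →L[ℝ] ℝ :=
  LinearMap.toContinuousLinearMap ((LinearMap.proj j).comp W.mulVecLin)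

lemma rowCLM_apply (W : Matrix (Fin k) (Fin d) ℝ) (j : Fin k) (v : Fin d → ℝ) :
    rowCLM W j v = W.mulVec v j := rfl

lemma key_integral (W : Matrix (Fin k) (Fin d) ℝ) (c : Fin d → ℝ)
    (ξ ξ' : Ω → Fin d → ℝ) (hξ : Measurable ξ) (hξ' : Measurable ξ')
    (hint : Integrable ξ μ) (hint' : Integrable ξ' μ)
    (hmean : ∫ ω, ξ ω ∂μ = 0) (hmean' : ∫ ω, ξ' ω ∂μ = 0)
    (hindep : IndepFun ξ ξ' μ) :
    ∫ ω, W.mulVec (c + ξ ω) ⬝ᵥ W.mulVec (c + ξ' ω) ∂μ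
      = W.mulVec c ⬝ᵥ W.mulVec c := by
  have hf : ∀ j, Integrable (fun ω => W.mulVec (ξ ω) j) μ := fun j =>
    (rowCLM W j).integrable_comp hint
  have hg : ∀ j, Integrable (fun ω => W.mulVec (ξ' ω) j) μ := fun j =>
    (rowCLM W j).integrable_comp hint'
  have hfmean : ∀ j, ∫ ω, W.mulVec (ξ ω) j ∂μ = 0 := by
    intro j
    have := (rowCLM W j).integral_comp_comm hint
    simpa [rowCLM_apply, hmean] using this
  have hgmean : ∀ j, ∫ ω, W.mulVec (ξ' ω) j ∂μ = 0 := by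
    intro j
    have := (rowCLM W j).integral_comp_comm hint'
    simpa [rowCLM_apply, hmean'] using this
  have hfm : ∀ j, Measurable (fun ω => W.mulVec (ξ ω) j) := fun j =>
    (rowCLM W j).continuous.measurable.comp hξ
  have hgm : ∀ j, Measurable (fun ω => W.mulVec (ξ' ω) j) := fun j =>
    (rowCLM W j).continuous.measurable.comp hξ'
  have hind : ∀ j j' : Fin k,
      IndepFun (fun ω => W.mulVec (ξ ω) j) (fun ω => W.mulVec (ξ' ω) j') μ := by
    intro j j'
    exact hindep.comp (rowCLM W j).continuous.measurable (rowCLM W j').continuous.measurable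
  -- pointwise expansion
  have hpt : ∀ ω, W.mulVec (c + ξ ω) ⬝ᵥ W.mulVec (c + ξ' ω)
      = ∑ j, (W.mulVec c j * W.mulVec c j
          + W.mulVec c j * W.mulVec (ξ' ω) j
          + W.mulVec (ξ ω) j * W.mulVec c j
          + W.mulVec (ξ ω) j * W.mulVec (ξ' ω) j) := by
    intro ω
    simp only [dotProduct, Matrix.mulVec_add, Pi.add_apply]
    exact Finset.sum_congr rfl fun j _ => by ring
  have hterm : ∀ j : Fin k, Integrable (fun ω =>
      W.mulVec c j * W.mulVec c j
        + W.mulVec c j * W.mulVec (ξ' ω) j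
        + W.mulVec (ξ ω) j * W.mulVec c j
        + W.mulVec (ξ ω) j * W.mulVec (ξ' ω) j) μ := by
    intro j
    have h4 : Integrable (fun ω => W.mulVec (ξ ω) j * W.mulVec (ξ' ω) j) μ :=
      (hind j j).integrable_mul (hf j) (hg j)
    exact (((integrable_const _).add ((hg j).const_mul _)).add
      ((hf j).mul_const _)).add h4
  calc ∫ ω, W.mulVec (c + ξ ω) ⬝ᵥ W.mulVec (c + ξ' ω) ∂μ
      = ∫ ω, ∑ j, (W.mulVec c j * W.mulVec c j
          + W.mulVec c j * W.mulVec (ξ' ω) j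
          + W.mulVec (ξ ω) j * W.mulVec c j
          + W.mulVec (ξ ω) j * W.mulVec (ξ' ω) j) ∂μ := by
        exact integral_congr_ae (Filter.Eventually.of_forall hpt)
    _ = ∑ j, ∫ ω, (W.mulVec c j * W.mulVec c j
          + W.mulVec c j * W.mulVec (ξ' ω) j
          + W.mulVec (ξ ω) j * W.mulVec c j
          + W.mulVec (ξ ω) j * W.mulVec (ξ' ω) j) ∂μ :=
        integral_finset_sum _ (fun j _ => hterm j)
    _ = W.mulVec c ⬝ᵥ W.mulVec c := by
        rw [dotProduct]
        refine Finset.sum_congr rfl fun j _ => ?_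
        have h4 : ∫ ω, W.mulVec (ξ ω) j * W.mulVec (ξ' ω) j ∂μ = 0 := by
          have := (hind j j).integral_mul_eq_mul_integral (hfm j).aestronglyMeasurable (hgm j).aestronglyMeasurable
          simpa [Pi.mul_apply, hfmean j, hgmean j] using
            (this : ∫ ω, W.mulVec (ξ ω) j * W.mulVec (ξ' ω) j ∂μ = _)
        have h1 : Integrable (fun _ : Ω => W.mulVec c j * W.mulVec c j) μ := integrable_const _
        have h2 : Integrable (fun ω => W.mulVec c j * W.mulVec (ξ' ω) j) μ := (hg j).const_mul _
        have h3 : Integrable (fun ω => W.mulVec (ξ ω) j * W.mulVec c j) μ := (hf j).mul_const _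
        have h4i : Integrable (fun ω => W.mulVec (ξ ω) j * W.mulVec (ξ' ω) j) μ :=
          (hind j j).integrable_mul (hf j) (hg j)
        have e1 : ∫ ω, ((W.mulVec c j * W.mulVec c j + W.mulVec c j * W.mulVec (ξ' ω) j
              + W.mulVec (ξ ω) j * W.mulVec c j) + W.mulVec (ξ ω) j * W.mulVec (ξ' ω) j) ∂μ
            = (∫ ω, (W.mulVec c j * W.mulVec c j + W.mulVec c j * W.mulVec (ξ' ω) j
              + W.mulVec (ξ ω) j * W.mulVec c j) ∂μ)
              + ∫ ω, W.mulVec (ξ ω) j * W.mulVec (ξ' ω) j ∂μ :=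
          integral_add ((h1.add h2).add h3) h4i
        have e2 : ∫ ω, ((W.mulVec c j * W.mulVec c j + W.mulVec c j * W.mulVec (ξ' ω) j)
              + W.mulVec (ξ ω) j * W.mulVec c j) ∂μ
            = (∫ ω, (W.mulVec c j * W.mulVec c j + W.mulVec c j * W.mulVec (ξ' ω) j) ∂μ)
              + ∫ ω, W.mulVec (ξ ω) j * W.mulVec c j ∂μ :=
          integral_add (h1.add h2) h3
        have e3 : ∫ ω, (W.mulVec c j * W.mulVec c j + W.mulVec c j * W.mulVec (ξ' ω) j) ∂μ
            = (∫ _ : Ω, W.mulVec c j * W.mulVec c j ∂μ)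
              + ∫ ω, W.mulVec c j * W.mulVec (ξ' ω) j ∂μ :=
          integral_add h1 h2
        rw [e1, e2, e3, integral_const, integral_const_mul, integral_mul_const,
          hfmean j, hgmean j, h4]
        simp
end Aux


section Alg
variable {d k : ℕ}

lemma dot_eq (W : Matrix (Fin k) (Fin d) ℝ) (v : Fin d → ℝ) :
    W.mulVec v ⬝ᵥ W.mulVec v = ∑ a, ∑ b, (Wᵀ * W) a b * (v a * v b) := by
  simp only [dotProduct, mulVec, Matrix.mul_apply, transpose_apply, Finset.sum_mul,
    Finset.mul_sum, dotProduct]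
  rw [Finset.sum_comm]
  refine Finset.sum_congr rfl fun a _ => ?_
  rw [Finset.sum_comm]
  exact Finset.sum_congr rfl fun b _ => Finset.sum_congr rfl fun j _ => by ring

lemma frob_expand (A B : Matrix (Fin d) (Fin d) ℝ) :
    frobSq (A - B) = frobSq A - 2 * (∑ a, ∑ b, A a b * B a b) + frobSq B := by
  simp only [frobSq, Matrix.sub_apply, Finset.mul_sum, ← Finset.sum_add_distrib,
    ← Finset.sum_sub_distrib]
  refine Finset.sum_congr rfl fun a _ => Finset.sum_congr rfl fun b _ => by ring

lemma frob_symm (A B : Matrix (Fin d) (Fin d) ℝ) : frobSq (A - B) = frobSq (B - A) := by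
  simp only [frobSq, Matrix.sub_apply]
  exact Finset.sum_congr rfl fun a _ => Finset.sum_congr rfl fun b _ => by ring

end Alg

/-- The self-supervised objective built from positive pairs `(x + ξ, x + ξ')` with
independent mean-zero perturbations equals, up to an additive constant, the Frobenius
matrix-factorization objective for `M = (1/n) ∑ᵢ xᵢ xᵢᵀ`; in particular the two
objectives have the same minimizers. -/
theorem stmt_7 (d k n : ℕ) (hd : 1 ≤ d) (hk : 1 ≤ k) (hn : 1 ≤ n)
    (x : Fin n → Fin d → ℝ)
    (M : Matrix (Fin d) (Fin d) ℝ)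
    (hM : M = (n : ℝ)⁻¹ • ∑ i, vecMulVec (x i) (x i))
    {Ω : Type*} [MeasurableSpace Ω] (μ : Measure Ω) [IsProbabilityMeasure μ]
    (ξ ξ' : Ω → Fin d → ℝ) (hξ : Measurable ξ) (hξ' : Measurable ξ')
    (hint : Integrable ξ μ) (hint' : Integrable ξ' μ)
    (hmean : ∫ ω, ξ ω ∂μ = 0) (hmean' : ∫ ω, ξ' ω ∂μ = 0)
    (hindep : IndepFun ξ ξ' μ) :
    (∀ W : Matrix (Fin k) (Fin d) ℝ,
        -((n : ℝ)⁻¹ * ∑ i, ∫ ω, W.mulVec (x i + ξ ω) ⬝ᵥ W.mulVec (x i + ξ' ω) ∂μ) +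
            (1 / 2) * frobSq (Wᵀ * W) =
          (1 / 2) * frobSq (Wᵀ * W - M) - (1 / 2) * frobSq M) ∧
      ∀ W : Matrix (Fin k) (Fin d) ℝ,
        IsMinOn (fun W' : Matrix (Fin k) (Fin d) ℝ =>
            -((n : ℝ)⁻¹ * ∑ i, ∫ ω, W'.mulVec (x i + ξ ω) ⬝ᵥ W'.mulVec (x i + ξ' ω) ∂μ) +
              (1 / 2) * frobSq (W'ᵀ * W')) Set.univ W ↔
          IsMinOn (fun W' : Matrix (Fin k) (Fin d) ℝ =>
            frobSq (M - W'ᵀ * W')) Set.univ W := by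
  have hMab : ∀ a b, M a b = (n : ℝ)⁻¹ * ∑ i, x i a * x i b := by
    intro a b
    simp [hM, Matrix.sum_apply, vecMulVec_apply, Finset.mul_sum]
  have part1 : ∀ W : Matrix (Fin k) (Fin d) ℝ,
      -((n : ℝ)⁻¹ * ∑ i, ∫ ω, W.mulVec (x i + ξ ω) ⬝ᵥ W.mulVec (x i + ξ' ω) ∂μ) +
          (1 / 2) * frobSq (Wᵀ * W) =
        (1 / 2) * frobSq (Wᵀ * W - M) - (1 / 2) * frobSq M := by
    intro W
    have hS : (n : ℝ)⁻¹ * ∑ i, ∫ ω, W.mulVec (x i + ξ ω) ⬝ᵥ W.mulVec (x i + ξ' ω) ∂μ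
        = ∑ a, ∑ b, (Wᵀ * W) a b * M a b := by
      have h1 : ∀ i, ∫ ω, W.mulVec (x i + ξ ω) ⬝ᵥ W.mulVec (x i + ξ' ω) ∂μ
          = W.mulVec (x i) ⬝ᵥ W.mulVec (x i) := fun i =>
        key_integral W (x i) ξ ξ' hξ hξ' hint hint' hmean hmean' hindep
      have step1 : (n : ℝ)⁻¹ * ∑ i, ∑ a, ∑ b, (Wᵀ * W) a b * (x i a * x i b)
          = ∑ a, ∑ b, (Wᵀ * W) a b * ((n : ℝ)⁻¹ * ∑ i, x i a * x i b) := by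
        simp only [Finset.mul_sum]
        rw [Finset.sum_comm]
        refine Finset.sum_congr rfl fun a _ => ?_
        rw [Finset.sum_comm]
        exact Finset.sum_congr rfl fun b _ => Finset.sum_congr rfl fun i _ => by ring
      simp only [h1, dot_eq]
      rw [step1]
      exact Finset.sum_congr rfl fun a _ => Finset.sum_congr rfl fun b _ => by rw [hMab]
    rw [hS, frob_expand]
    ring
  refine ⟨part1, fun W => ?_⟩
  have hfg : ∀ W' : Matrix (Fin k) (Fin d) ℝ,
      -((n : ℝ)⁻¹ * ∑ i, ∫ ω, W'.mulVec (x i + ξ ω) ⬝ᵥ W'.mulVec (x i + ξ' ω) ∂μ) +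
          (1 / 2) * frobSq (W'ᵀ * W')
        = (1 / 2) * frobSq (M - W'ᵀ * W') - (1 / 2) * frobSq M := by
    intro W'
    rw [part1 W', frob_symm]
  constructor
  · intro h y hy
    have h1 := h (Set.mem_univ y)
    simp only [Set.mem_setOf_eq] at h1 ⊢
    have e1 := hfg W
    have e2 := hfg y
    rw [e1, e2] at h1
    linarith
  · intro h y hy
    have h1 := h (Set.mem_univ y)
    simp only [Set.mem_setOf_eq] at h1 ⊢
    rw [hfg W, hfg y]
    linarith
end

section
/- Let $d \ge 2$, let $e_1, e_2 \in \mathbb{R}^d$ be orthonormal, let $\rho > 0$ and $\tau > 0$, and consider $n \ge 1$ datapoints $x_1, \dots, x_n \in \mathbb{R}^d$ where each $x_i$ is of one of the forms $x_i = e_1 - q_i \tau e_2 + \rho \xi_i$ (class 1), $x_i = -e_1 - q_i \tau e_2 + \rho \xi_i$ (class 2), or $x_i = e_2 + \rho \xi_i$ (class 3), with $q_i \in \{0,1\}$ and $\xi_i \in \mathbb{R}^d$. Set $M = \frac{1}{n} \sum_{i=1}^n x_i x_i^{\top}$ and $M' = \frac{1}{n} \sum_{i=1}^n \xi_i \xi_i^{\top}$.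 Suppose that $|M'_{aa} - 1| \le 1/d$ for every $a \in [d]$ and $|M'_{ab}| \le 1/d$ for every $a \ne b$ in $[d]$. Then for every unit vector $u \in \mathbb{R}^d$ with $\langle u, e_2 \rangle = 0$, one has $u^{\top} M u \le 2 + 4 \rho^2$. -/
open Matrix

theorem quadform_aux (d n : ℕ) (u : Fin d → ℝ) (f : Fin n → Fin d → ℝ) :
    u ⬝ᵥ (((n:ℝ)⁻¹ • ∑ i, vecMulVec (f i) (f i)).mulVec u)
      = (n:ℝ)⁻¹ * ∑ i, (u ⬝ᵥ f i)^2 := by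
  rw [Matrix.smul_mulVec, dotProduct_smul, smul_eq_mul]
  congr 1
  have h1 : (∑ i, vecMulVec (f i) (f i)).mulVec u
      = ∑ i, (vecMulVec (f i) (f i)).mulVec u := by
    ext a
    simp only [mulVec, dotProduct, vecMulVec_apply, Matrix.sum_apply,
      Finset.sum_apply, Finset.sum_mul]
    rw [Finset.sum_comm]
  have h2 : ∀ v : Fin d → ℝ, vecMulVec v v *ᵥ u = (v ⬝ᵥ u) • v := by
    intro v
    ext a
    simp only [mulVec, dotProduct, vecMulVec_apply, Pi.smul_apply, smul_eq_mul,
      Finset.sum_mul]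
    exact Finset.sum_congr rfl fun b _ => by ring
  simp only [h1, h2, dotProduct, Finset.sum_apply, Pi.smul_apply, smul_eq_mul,
    Finset.mul_sum, sq]
  rw [Finset.sum_comm]
  refine Finset.sum_congr rfl fun i _ => Finset.sum_congr rfl fun a _ => ?_
  have : (∑ b, f i b * u b) = ∑ b, u b * f i b :=
    Finset.sum_congr rfl fun b _ => mul_comm _ _
  rw [this]; ring

set_option maxHeartbeats 1000000 in
/-- Deterministic version of part (2) of Lemma 3: in the three-class toy data model,
if the empirical second-moment matrix of the noise vectors is entrywise close to the
identity, then the empirical second-moment matrix `M` of the data has uniformly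
bounded Rayleigh quotients on the orthogonal complement of `e₂`. -/
theorem stmt_9 (d n : ℕ) (hd : 2 ≤ d) (hn : 1 ≤ n)
    (e₁ e₂ : Fin d → ℝ) (he₁ : e₁ ⬝ᵥ e₁ = 1) (he₂ : e₂ ⬝ᵥ e₂ = 1) (he₁₂ : e₁ ⬝ᵥ e₂ = 0)
    (ρ τ : ℝ) (hρ : 0 < ρ) (hτ : 0 < τ)
    (x ξ : Fin n → Fin d → ℝ) (q : Fin n → ℝ) (hq : ∀ i, q i = 0 ∨ q i = 1)
    (hx : ∀ i, x i = e₁ - (q i * τ) • e₂ + ρ • ξ i ∨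
               x i = -e₁ - (q i * τ) • e₂ + ρ • ξ i ∨
               x i = e₂ + ρ • ξ i)
    (M M' : Matrix (Fin d) (Fin d) ℝ)
    (hM : M = (n : ℝ)⁻¹ • ∑ i, vecMulVec (x i) (x i))
    (hM' : M' = (n : ℝ)⁻¹ • ∑ i, vecMulVec (ξ i) (ξ i))
    (hdiag : ∀ a, |M' a a - 1| ≤ 1 / d)
    (hoff : ∀ a b, a ≠ b → |M' a b| ≤ 1 / d) :
    ∀ u : Fin d → ℝ, u ⬝ᵥ u = 1 → u ⬝ᵥ e₂ = 0 →
      u ⬝ᵥ M.mulVec u ≤ 2 + 4 * ρ ^ 2 := by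
  intro u hu hue2
  have hn0 : (0:ℝ) < n := by exact_mod_cast hn
  have hd0 : (0:ℝ) < d := by positivity
  have hu2 : ∑ a, u a ^ 2 = 1 := by
    simpa [sq, dotProduct] using hu
  -- bound on u M' u
  have hM'le : u ⬝ᵥ M'.mulVec u ≤ 2 := by
    have hexp : u ⬝ᵥ M'.mulVec u = ∑ a, ∑ b, u a * (M' a b * u b) := by
      simp [dotProduct, mulVec, Finset.mul_sum]
    have habs : ∀ a b, u a * (M' a b * u b)
        ≤ |u a| * |u b| * (1/d) + (if a = b then u a^2 else 0) := by
      intro a b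
      by_cases hab : a = b
      · subst hab
        simp only [if_pos rfl]
        have h1 : M' a a ≤ 1 + 1/d := by
          have := abs_le.mp (hdiag a); linarith [this.2]
        have h2 : |u a| * |u a| = u a ^ 2 := by
          rw [← abs_mul, ← sq, abs_sq]
        have h3 := mul_le_mul_of_nonneg_left h1 (sq_nonneg (u a))
        simp only [if_true]
        have h4 : u a * (M' a a * u a) = u a ^ 2 * M' a a := by ring
        have h5 : u a ^ 2 * (1 + 1 / d) = u a ^ 2 * (1 / d) + u a ^ 2 := by ring
        have h6 : |u a| * |u a| * (1 / d) = u a ^ 2 * (1 / d) := by rw [h2]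
        linarith
      · simp only [if_neg hab, add_zero]
        calc u a * (M' a b * u b) ≤ |u a * (M' a b * u b)| := le_abs_self _
          _ = |u a| * |u b| * |M' a b| := by rw [abs_mul, abs_mul]; ring
          _ ≤ |u a| * |u b| * (1/d) := by
              apply mul_le_mul_of_nonneg_left (hoff a b hab) (by positivity)
    have hcs1 : (∑ a, |u a|) ^ 2 ≤ (d:ℝ) := by
      have := Finset.sum_mul_sq_le_sq_mul_sq Finset.univ (fun a => |u a|) (fun _ => (1:ℝ))
      simp only [mul_one, one_pow, sq_abs] at this
      calc (∑ a, |u a|) ^ 2 ≤ (∑ a, u a ^ 2) * ∑ _a : Fin d, (1:ℝ) := this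
        _ = (d:ℝ) := by simp [hu2]
    calc u ⬝ᵥ M'.mulVec u = ∑ a, ∑ b, u a * (M' a b * u b) := hexp
      _ ≤ ∑ a, ∑ b, (|u a| * |u b| * (1/d) + (if a = b then u a^2 else 0)) := by
          exact Finset.sum_le_sum fun a _ => Finset.sum_le_sum fun b _ => habs a b
      _ = (∑ a, |u a|) * (∑ b, |u b|) * (1/d) + ∑ a, u a ^ 2 := by
          simp only [Finset.sum_add_distrib, Finset.sum_ite_eq, Finset.mem_univ, if_true]
          congr 1
          rw [Finset.sum_mul, Finset.sum_mul]
          refine Finset.sum_congr rfl fun a _ => ?_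
          rw [Finset.mul_sum, Finset.sum_mul]
      _ ≤ (d:ℝ) * (1/d) + 1 := by
          have h0 : (0:ℝ) ≤ 1/d := by positivity
          have : (∑ a, |u a|) * (∑ b, |u b|) ≤ (d:ℝ) := by
            have := hcs1; nlinarith [sq_nonneg (∑ a, |u a|)]
          nlinarith [hu2]
      _ = 2 := by
          rw [mul_one_div, div_self hd0.ne']
          norm_num
  -- quadratic form identities
  have hM'q : u ⬝ᵥ M'.mulVec u = (n:ℝ)⁻¹ * ∑ i, (u ⬝ᵥ ξ i)^2 := by
    rw [hM']; exact quadform_aux d n u ξ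
  have hMq : u ⬝ᵥ M.mulVec u = (n:ℝ)⁻¹ * ∑ i, (u ⬝ᵥ x i)^2 := by
    rw [hM]; exact quadform_aux d n u x
  have hcs : (u ⬝ᵥ e₁) ^ 2 ≤ 1 := by
    have := Finset.sum_mul_sq_le_sq_mul_sq Finset.univ u e₁
    have he1 : ∑ a, e₁ a ^ 2 = 1 := by simpa [sq, dotProduct] using he₁
    calc (u ⬝ᵥ e₁)^2 = (∑ a, u a * e₁ a)^2 := rfl
      _ ≤ (∑ a, u a ^2) * ∑ a, e₁ a ^ 2 := this
      _ = 1 := by rw [hu2, he1, one_mul]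
  have hterm : ∀ i, (u ⬝ᵥ x i)^2 ≤ 2 + 2 * ρ^2 * (u ⬝ᵥ ξ i)^2 := by
    intro i
    have hd1 : u ⬝ᵥ x i = u ⬝ᵥ e₁ + ρ * (u ⬝ᵥ ξ i) ∨
               u ⬝ᵥ x i = -(u ⬝ᵥ e₁) + ρ * (u ⬝ᵥ ξ i) ∨
               u ⬝ᵥ x i = ρ * (u ⬝ᵥ ξ i) := by
      rcases hx i with h | h | h
      · left
        rw [h, dotProduct_add, dotProduct_sub, dotProduct_smul, dotProduct_smul, hue2]
        simp
      · right; left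
        rw [h, dotProduct_add, dotProduct_sub, dotProduct_smul, dotProduct_smul, hue2,
          dotProduct_neg]
        simp
      · right; right
        rw [h, dotProduct_add, dotProduct_smul, hue2]
        simp
    rcases hd1 with h | h | h <;> rw [h] <;>
      nlinarith [sq_nonneg (u ⬝ᵥ e₁ - ρ * (u ⬝ᵥ ξ i)), sq_nonneg (u ⬝ᵥ e₁ + ρ * (u ⬝ᵥ ξ i)),
        sq_nonneg (ρ * (u ⬝ᵥ ξ i)), hcs]
  have hsum2 : (n:ℝ)⁻¹ * ∑ i, (u ⬝ᵥ ξ i)^2 ≤ 2 := hM'q ▸ hM'le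
  calc u ⬝ᵥ M.mulVec u = (n:ℝ)⁻¹ * ∑ i, (u ⬝ᵥ x i)^2 := hMq
    _ ≤ (n:ℝ)⁻¹ * ∑ i, (2 + 2 * ρ^2 * (u ⬝ᵥ ξ i)^2) := by
        apply mul_le_mul_of_nonneg_left (Finset.sum_le_sum fun i _ => hterm i) (by positivity)
    _ = 2 + 2 * ρ^2 * ((n:ℝ)⁻¹ * ∑ i, (u ⬝ᵥ ξ i)^2) := by
        rw [Finset.sum_add_distrib, Finset.sum_const, Finset.card_univ, Fintype.card_fin,
          nsmul_eq_mul, ← Finset.mul_sum, mul_add, ← mul_assoc, inv_mul_cancel₀ hn0.ne']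
        ring
    _ ≤ 2 + 2 * ρ^2 * 2 := by nlinarith [hsum2, sq_nonneg ρ]
    _ = 2 + 4 * ρ^2 := by ring
end

section
/- There exists $d_0 \in \mathbb{N}$ such that for every integer $d \ge d_0$ the following holds. Set $\rho = d^{-1/5}$ and $\tau = d^{1/5}$, let $e_1, e_2 \in \mathbb{R}^d$ be orthonormal, and consider $n \ge 1$ datapoints $x_1, \dots, x_n \in \mathbb{R}^d$ where each $x_i$ is of one of the forms $x_i = e_1 - q_i \tau e_2 + \rho \xi_i$ (class 1), $x_i = -e_1 - q_i \tau e_2 + \rho \xi_i$ (class 2), or $x_i = e_2 + \rho \xi_i$ (class 3), with $q_i \in \{0,1\}$ and $\xi_i \in \mathbb{R}^d$. Set $M = \frac{1}{n} \sum_{i=1}^n x_i x_i^{\top}$ and $M' = \frac{1}{n} \sum_{i=1}^n \xi_i \xi_i^{\top}$. Suppose: (i) $|M'_{aa} - 1| \le 1/d$ for every $a$ and $|M'_{ab}| \le 1/d$ for every $a \ne b$; (ii) at least $n/3$ of the datapoints are class-1 or class-2 points with $q_i = 1$; and (iii) $\| \frac{1}{n} \sum_{i=1}^n \xi_i \|_2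 \le 1/\rho$. Then there exists a two-dimensional subspace $V$ of $\mathbb{R}^d$ spanned by eigenvectors of $M$ associated with its two largest eigenvalues (counted with multiplicity) such that the orthogonal projection $\Pi$ of $\mathbb{R}^d$ onto $V$ satisfies $\| \Pi e_2 \|_2 \ge 1 - 9 d^{-1/5}$. -/
open Matrix
open Finset

lemma stmt11_bil {n d : ℕ} (c : ℝ) (y : Fin n → Fin d → ℝ) (v w : Fin d → ℝ) :
    v ⬝ᵥ ((c • ∑ i, vecMulVec (y i) (y i)).mulVec w)
      = c * ∑ i, (y i ⬝ᵥ v) * (y i ⬝ᵥ w) := by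
  have h2 : (∑ i : Fin n, vecMulVec (y i) (y i)).mulVec w = ∑ i : Fin n, (y i ⬝ᵥ w) • y i := by
    funext a
    simp only [Matrix.mulVec, dotProduct, Matrix.sum_apply, vecMulVec_apply, Finset.sum_apply,
      Pi.smul_apply, smul_eq_mul, Finset.sum_mul]
    rw [Finset.sum_comm]
    exact Finset.sum_congr rfl fun i _ => Finset.sum_congr rfl fun b _ => by ring
  rw [smul_mulVec, dotProduct_smul, h2, smul_eq_mul]
  congr 1
  simp only [dotProduct, Finset.sum_apply, Pi.smul_apply, smul_eq_mul, Finset.mul_sum]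
  rw [Finset.sum_comm]
  refine Finset.sum_congr rfl fun i _ => ?_
  calc ∑ a, v a * ((∑ b, y i b * w b) * y i a)
      = (∑ b, y i b * w b) * ∑ a, y i a * v a := by
        rw [Finset.mul_sum]; exact Finset.sum_congr rfl fun a _ => by ring
    _ = (∑ a, y i a * v a) * ∑ b, y i b * w b := mul_comm _ _
    _ = ∑ b, (∑ a, y i a * v a) * (y i b * w b) := by rw [Finset.mul_sum]

lemma stmt11_CS2 (a1 a2 b1 b2 : ℝ) : (a1*b1 + a2*b2)^2 ≤ (a1^2 + a2^2) * (b1^2 + b2^2) := by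
  nlinarith [sq_nonneg (a1*b2 - a2*b1)]

lemma stmt11_sq_le {a b : ℝ} (hb : 0 ≤ b) (h : a^2 ≤ b^2) : -b ≤ a ∧ a ≤ b := by
  constructor <;> nlinarith

lemma stmt11_mul_le_half_sq (a b : ℝ) : a*b ≤ (a^2 + b^2)/2 := by nlinarith [sq_nonneg (a-b)]

lemma stmt11_neg_mul_le_half_sq (a b : ℝ) : -(a*b) ≤ (a^2 + b^2)/2 := by nlinarith [sq_nonneg (a+b)]

lemma stmt11_dot_pos {d : ℕ} {v : Fin d → ℝ} (hv : v ≠ 0) : 0 < v ⬝ᵥ v := by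
  obtain ⟨i, hi⟩ := Function.ne_iff.mp hv
  unfold dotProduct
  refine Finset.sum_pos' (fun j _ => mul_self_nonneg _) ⟨i, Finset.mem_univ i, ?_⟩
  exact mul_self_pos.mpr hi

lemma stmt11_dot_nonneg {d : ℕ} (v : Fin d → ℝ) : 0 ≤ v ⬝ᵥ v :=
  Finset.sum_nonneg fun j _ => mul_self_nonneg _

lemma stmt11_R2bound (R2 a b ρ τ : ℝ) (hρτ : ρ * τ = 1) (hρpos : 0 < ρ) (hρ100 : ρ ≤ 1/100)
    (hR2nn : 0 ≤ R2) (heq : R2 = ρ * a + ρ^2 * b)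
    (ha : a^2 ≤ τ^2 * (2*R2)) (hb : b^2 ≤ 2 * (2*R2)) : R2 ≤ 4 := by
  have hA : (ρ*a)^2 ≤ 2*R2 := by
    calc (ρ*a)^2 = ρ^2 * a^2 := by ring
      _ ≤ ρ^2 * (τ^2*(2*R2)) := mul_le_mul_of_nonneg_left ha (sq_nonneg ρ)
      _ = (ρ*τ)^2 * (2*R2) := by ring
      _ = 2*R2 := by rw [hρτ]; ring
  have hρ4 : ρ^4 ≤ (1/100)^4 := pow_le_pow_left₀ hρpos.le hρ100 4
  have hB : (ρ^2*b)^2 ≤ R2/10^6 := by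
    calc (ρ^2*b)^2 = ρ^4 * b^2 := by ring
      _ ≤ (1/100)^4 * (2*(2*R2)) := mul_le_mul hρ4 hb (sq_nonneg b) (by norm_num)
      _ ≤ R2/10^6 := by norm_num; linarith
  nlinarith [sq_nonneg (ρ*a - 1000*(ρ^2*b)), sq_nonneg (ρ*a + ρ^2*b)]

set_option maxHeartbeats 1600000 in
lemma stmt11_arith (ρ τ N A2 R2 D2 : ℝ) (hρτ : ρ * τ = 1) (hρpos : 0 < ρ)
    (hρ100 : ρ ≤ 1/100) (hτ100 : 100 ≤ τ) (hNlow : τ^2/3 - 3 ≤ N)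
    (hA2 : A2 ≤ (τ+3)^2) (hA2nn : 0 ≤ A2) (hR2nn : 0 ≤ R2) (hR2 : R2 ≤ 4)
    (hD2 : D2 = A2 + N^2 + R2) :
    0 < D2 ∧ 0 ≤ N - 2*ρ^2 ∧ 0 ≤ 1 - 9*ρ ∧ (1 - 9*ρ)^2 * D2 ≤ (N - 2*ρ^2)^2 := by
  have hττ : (10000:ℝ) ≤ τ^2 := by nlinarith [hτ100]
  have hN : (2500:ℝ) ≤ N := by linarith
  have hρ2 : ρ^2 ≤ 1/10000 := by nlinarith [hρpos, hρ100]
  have hD2pos : 0 < D2 := by nlinarith [hN]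
  refine ⟨hD2pos, by nlinarith, by linarith, ?_⟩
  have h1 : A2 + R2 ≤ 2*τ^2 := by nlinarith [hτ100]
  have hτN : τ^2 ≤ 4*N := by linarith
  have h2 : 2*τ^2 ≤ 32*ρ^2*N^2 := by
    have h4 : τ^2*τ^2 ≤ (4*N)*(4*N) := by nlinarith [hτN, hττ, hN]
    calc 2*τ^2 = 2*((ρ*τ)^2*τ^2) := by rw [hρτ]; ring
      _ = 2*ρ^2*(τ^2*τ^2) := by ring
      _ ≤ 2*ρ^2*((4*N)*(4*N)) := by nlinarith [sq_nonneg ρ, h4]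
      _ = 32*ρ^2*N^2 := by ring
  have h3 : D2 ≤ (1+32*ρ^2)*N^2 := by nlinarith [h1, h2]
  have h4 : (1-9*ρ)^2 ≤ 1-17*ρ := by nlinarith [hρpos, hρ100]
  have hq : ρ^2 ≤ ρ/100 := by nlinarith [hρpos, hρ100]
  have h5 : (1-17*ρ)*(1+32*ρ^2) ≤ 1-16*ρ := by nlinarith [hq, pow_nonneg hρpos.le 3]
  have h6 : (1-9*ρ)^2 * D2 ≤ (1-17*ρ)*((1+32*ρ^2)*N^2) :=
    mul_le_mul h4 h3 (le_of_lt hD2pos) (by linarith)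
  have h7 : (1-17*ρ)*((1+32*ρ^2)*N^2) ≤ (1-16*ρ)*N^2 := by nlinarith [h5, sq_nonneg N]
  have h8 : (1-16*ρ)*N^2 ≤ (N - 2*ρ^2)^2 := by
    nlinarith [mul_nonneg (mul_nonneg hρpos.le (by linarith : (0:ℝ) ≤ N)) (by linarith : (0:ℝ) ≤ 4*N - ρ), sq_nonneg (ρ^2)]
  linarith

lemma stmt11_absX {X : ℝ} (h : X^2 ≤ 2) : -(3/2) ≤ X ∧ X ≤ 3/2 := by
  constructor <;> nlinarith

lemma stmt11_one_le_sq {τ : ℝ} (h : 100 ≤ τ) : (1:ℝ) ≤ τ^2 := by nlinarith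

lemma stmt11_Acomb (ρ τ A P1 P2 P3 P4 : ℝ) (hρτ : ρ*τ = 1) (hρpos : 0 < ρ)
    (hρ100 : ρ ≤ 1/100) (hτpos : 0 < τ) (hAform : A = P1 + ρ*P2 + ρ*P3 + ρ^2*P4)
    (h1 : -τ ≤ P1) (h1' : P1 ≤ τ) (h2 : -(3/2) ≤ P2) (h2' : P2 ≤ 3/2)
    (h3 : -(3*τ/2) ≤ P3) (h3' : P3 ≤ 3*τ/2) (h4 : -2 ≤ P4) (h4' : P4 ≤ 2) :
    A^2 ≤ (τ+3)^2 := by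
  have hb2 : ρ * P2 ≤ ρ * (3/2) := mul_le_mul_of_nonneg_left h2' hρpos.le
  have hb2' : ρ * (-(3/2)) ≤ ρ * P2 := mul_le_mul_of_nonneg_left h2 hρpos.le
  have hb3 : ρ * P3 ≤ ρ * (3*τ/2) := mul_le_mul_of_nonneg_left h3' hρpos.le
  have hb3' : ρ * (-(3*τ/2)) ≤ ρ * P3 := mul_le_mul_of_nonneg_left h3 hρpos.le
  have he : ρ * (3*τ/2) = 3/2 := by
    rw [show ρ * (3*τ/2) = (ρ*τ) * (3/2) from by ring, hρτ]; ring
  have he' : ρ * (-(3*τ/2)) = -(3/2) := by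
    rw [show ρ * (-(3*τ/2)) = -((ρ*τ) * (3/2)) from by ring, hρτ]; ring
  have hb4 : ρ^2 * P4 ≤ ρ^2 * 2 := mul_le_mul_of_nonneg_left h4' (sq_nonneg ρ)
  have hb4' : ρ^2 * (-2) ≤ ρ^2 * P4 := mul_le_mul_of_nonneg_left h4 (sq_nonneg ρ)
  have hρsq : ρ^2 ≤ 1/2 := by nlinarith
  have hρ32 : ρ * (3/2) ≤ 3/200 := by nlinarith
  have hρ32' : -(3/200) ≤ ρ * (-(3/2)) := by nlinarith
  have hup : A ≤ τ + 3 := by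
    rw [hAform]
    linarith [h1', hb2, hb3, hb4, he, hρ32, hρsq]
  have hdn : -(τ + 3) ≤ A := by
    rw [hAform]
    linarith [h1, hb2', hb3', hb4', he', hρ32', hρsq]
  exact sq_le_sq' hdn hup


set_option maxHeartbeats 3200000 in
/-- Deterministic version of the self-supervised conclusion of Theorem 1: in the
three-class toy data model, the top-two eigenspace of the empirical second-moment
matrix `M` (the row span of the feature matrix learned by the self-supervised
objective) nearly contains the direction `e₂`: there are orthonormal eigenvectors
`v₁, v₂` of `M` for its two largest eigenvalues (with multiplicity) such that the
orthogonal projection `Π` onto their span satisfies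
`‖Π e₂‖₂ = √(⟨e₂,v₁⟩² + ⟨e₂,v₂⟩²) ≥ 1 - 9 d^{-1/5}`. -/
theorem stmt_11 : ∃ d₀ : ℕ, ∀ d : ℕ, d₀ ≤ d →
    ∀ (ρ τ : ℝ), ρ = (d : ℝ) ^ (-(1 : ℝ) / 5) → τ = (d : ℝ) ^ ((1 : ℝ) / 5) →
    ∀ (e₁ e₂ : Fin d → ℝ), e₁ ⬝ᵥ e₁ = 1 → e₂ ⬝ᵥ e₂ = 1 → e₁ ⬝ᵥ e₂ = 0 →
    ∀ (n : ℕ), 1 ≤ n →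
    ∀ (x ξ : Fin n → Fin d → ℝ) (q : Fin n → ℝ),
    (∀ i, q i = 0 ∨ q i = 1) →
    (∀ i, x i = e₁ - (q i * τ) • e₂ + ρ • ξ i ∨
          x i = -e₁ - (q i * τ) • e₂ + ρ • ξ i ∨
          x i = e₂ + ρ • ξ i) →
    ∀ (M M' : Matrix (Fin d) (Fin d) ℝ),
    M = (n : ℝ)⁻¹ • ∑ i, vecMulVec (x i) (x i) →
    M' = (n : ℝ)⁻¹ • ∑ i, vecMulVec (ξ i) (ξ i) →
    -- (i) the empirical noise second-moment matrix is entrywise close to the identity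
    (∀ a, |M' a a - 1| ≤ 1 / d) →
    (∀ a b, a ≠ b → |M' a b| ≤ 1 / d) →
    -- (ii) at least n/3 of the data are class-1 or class-2 points with qᵢ = 1
    (∃ S : Finset (Fin n), (n : ℝ) / 3 ≤ (S.card : ℝ) ∧
      ∀ i ∈ S, q i = 1 ∧
        (x i = e₁ - (q i * τ) • e₂ + ρ • ξ i ∨
         x i = -e₁ - (q i * τ) • e₂ + ρ • ξ i)) →
    -- (iii) the average noise vector has Euclidean norm at most 1/ρ
    Real.sqrt (((n : ℝ)⁻¹ • ∑ i, ξ i) ⬝ᵥ ((n : ℝ)⁻¹ • ∑ i, ξ i)) ≤ 1 / ρ →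
    -- conclusion: the top-two eigenspace of M nearly contains e₂
    ∃ (v₁ v₂ : Fin d → ℝ) (μ₁ μ₂ : ℝ),
      v₁ ⬝ᵥ v₁ = 1 ∧ v₂ ⬝ᵥ v₂ = 1 ∧ v₁ ⬝ᵥ v₂ = 0 ∧
      M.mulVec v₁ = μ₁ • v₁ ∧ M.mulVec v₂ = μ₂ • v₂ ∧ μ₂ ≤ μ₁ ∧
      (∀ (μ' : ℝ) (w : Fin d → ℝ), w ≠ 0 → M.mulVec w = μ' • w →
        w ⬝ᵥ v₁ = 0 → w ⬝ᵥ v₂ = 0 → μ' ≤ μ₂) ∧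
      Real.sqrt ((e₂ ⬝ᵥ v₁) ^ 2 + (e₂ ⬝ᵥ v₂) ^ 2) ≥ 1 - 9 * (d : ℝ) ^ (-(1 : ℝ) / 5) := by
  refine ⟨10 ^ 10, ?_⟩
  intro d hd ρ τ hρdef hτdef e₁ e₂ h11 h22 h12 n hn x ξ q hq hx M M' hMdef hM'def hdiag hoff hS₀ _
  obtain ⟨S, hScard, hS⟩ := hS₀
  -- basic scalar facts
  have hd2 : 2 ≤ d := le_trans (by norm_num) hd
  have hdpos : (0:ℝ) < d := by
    have : 0 < d := lt_of_lt_of_le (by norm_num) hd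
    exact_mod_cast this
  have hρpos : 0 < ρ := by rw [hρdef]; positivity
  have hτpos : 0 < τ := by rw [hτdef]; positivity
  have hρτ : ρ * τ = 1 := by
    rw [hρdef, hτdef, ← Real.rpow_add hdpos]
    norm_num
  have hτ100 : (100:ℝ) ≤ τ := by
    have h1 : ((10:ℝ)^10) ≤ (d:ℝ) := by exact_mod_cast hd
    have h2 : ((10:ℝ)^10) ^ ((1:ℝ)/5) ≤ (d:ℝ) ^ ((1:ℝ)/5) :=
      Real.rpow_le_rpow (by positivity) h1 (by norm_num)
    have h3 : ((10:ℝ)^10) ^ ((1:ℝ)/5) = 100 := by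
      have he : ((10:ℝ)^10) = ((100:ℝ))^(5:ℕ) := by norm_num
      rw [he, ← Real.rpow_natCast (100:ℝ) 5, ← Real.rpow_mul (by norm_num)]
      norm_num
    rw [hτdef]; linarith only [h2, h3.symm.le]
  have hρ100 : ρ ≤ 1/100 := by
    have h1 : ρ * 100 ≤ ρ * τ := by
      exact mul_le_mul_of_nonneg_left hτ100 hρpos.le
    rw [hρτ] at h1
    linarith only [h1]
  have hnpos : (0:ℝ) < n := by exact_mod_cast hn
  have hninv : (0:ℝ) ≤ (n:ℝ)⁻¹ := by positivity
  -- bilinear forms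
  have hMbil : ∀ v w, v ⬝ᵥ M.mulVec w = (n:ℝ)⁻¹ * ∑ i, (x i ⬝ᵥ v) * (x i ⬝ᵥ w) := by
    intro v w; rw [hMdef]; exact stmt11_bil _ _ _ _
  have hM'bil : ∀ v w, v ⬝ᵥ M'.mulVec w = (n:ℝ)⁻¹ * ∑ i, (ξ i ⬝ᵥ v) * (ξ i ⬝ᵥ w) := by
    intro v w; rw [hM'def]; exact stmt11_bil _ _ _ _
  -- quadratic bound for the noise second-moment
  have hM'q : ∀ v : Fin d → ℝ, (n:ℝ)⁻¹ * ∑ i, (ξ i ⬝ᵥ v) ^ 2 ≤ 2 * (v ⬝ᵥ v) := by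
    intro v
    have h1 : (n:ℝ)⁻¹ * ∑ i, (ξ i ⬝ᵥ v) ^ 2 = v ⬝ᵥ M'.mulVec v := by
      rw [hM'bil]; congr 1; exact Finset.sum_congr rfl fun i _ => by ring
    have h2 : v ⬝ᵥ M'.mulVec v = ∑ a, ∑ b, v a * M' a b * v b := by
      simp only [dotProduct, Matrix.mulVec, Finset.mul_sum]
      exact Finset.sum_congr rfl fun a _ => Finset.sum_congr rfl fun b _ => by ring
    have h3 : ∀ a b : Fin d, v a * M' a b * v b
        ≤ |v a| * |v b| * (1/d) + (if a = b then v a * v a else 0) := by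
      intro a b
      by_cases hab : a = b
      · subst hab
        rw [if_pos rfl]
        have heq : v a * M' a a * v a = v a * v a * (M' a a - 1) + v a * v a := by ring
        have hle : v a * v a * (M' a a - 1) ≤ |v a| * |v a| * (1/d) := by
          calc v a * v a * (M' a a - 1) ≤ |v a * v a * (M' a a - 1)| := le_abs_self _
            _ = |v a| * |v a| * |M' a a - 1| := by rw [abs_mul, abs_mul]
            _ ≤ |v a| * |v a| * (1/d) :=
              mul_le_mul_of_nonneg_left (hdiag a) (by positivity)
        linarith only [heq, hle]
      · simp only [if_neg hab, add_zero]
        calc v a * M' a b * v b ≤ |v a * M' a b * v b| := le_abs_self _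
          _ = |v a| * |v b| * |M' a b| := by rw [abs_mul, abs_mul]; ring
          _ ≤ |v a| * |v b| * (1/d) :=
            mul_le_mul_of_nonneg_left (hoff a b hab) (by positivity)
    have h4 : v ⬝ᵥ M'.mulVec v
        ≤ (∑ a, |v a|) * (∑ b, |v b|) * (1/d) + ∑ a, v a * v a := by
      rw [h2]
      calc ∑ a, ∑ b, v a * M' a b * v b
          ≤ ∑ a, ∑ b, (|v a| * |v b| * (1/d) + (if a = b then v a * v a else 0)) :=
            Finset.sum_le_sum fun a _ => Finset.sum_le_sum fun b _ => h3 a b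
        _ = (∑ a, ∑ b, |v a| * |v b| * (1/d)) + ∑ a, ∑ b, (if a = b then v a * v a else 0) := by
            rw [← Finset.sum_add_distrib]
            exact Finset.sum_congr rfl fun a _ => Finset.sum_add_distrib
        _ = (∑ a, |v a|) * (∑ b, |v b|) * (1/d) + ∑ a, v a * v a := by
            congr 1
            · symm
              rw [Finset.sum_mul, Finset.sum_mul]
              exact Finset.sum_congr rfl fun a _ => by
                rw [Finset.mul_sum, Finset.sum_mul]
            · exact Finset.sum_congr rfl fun a _ => by simp
    have h5 : (∑ a, |v a|) * (∑ b, |v b|) ≤ (d:ℝ) * (v ⬝ᵥ v) := by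
      have h := sq_sum_le_card_mul_sum_sq (s := (univ : Finset (Fin d))) (f := fun a => |v a|)
      simp only [Finset.card_univ, Fintype.card_fin, sq_abs] at h
      have hvv : ∑ a, (v a)^2 = v ⬝ᵥ v :=
        Finset.sum_congr rfl fun a _ => by rw [pow_two]
      calc (∑ a, |v a|) * (∑ b, |v b|) = (∑ a, |v a|)^2 := by ring
        _ ≤ (d:ℝ) * ∑ a, (v a)^2 := h
        _ = (d:ℝ) * (v ⬝ᵥ v) := by rw [hvv]
    have hvv' : ∑ a, v a * v a = v ⬝ᵥ v := rfl
    have h6 : (∑ a, |v a|) * (∑ b, |v b|) * (1/d) ≤ ((d:ℝ) * (v ⬝ᵥ v)) * (1/d) :=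
      mul_le_mul_of_nonneg_right h5 (by positivity)
    have h7 : ((d:ℝ) * (v ⬝ᵥ v)) * (1/d) = v ⬝ᵥ v := by field_simp
    rw [h1]
    calc v ⬝ᵥ M'.mulVec v ≤ (∑ a, |v a|) * (∑ b, |v b|) * (1/d) + ∑ a, v a * v a := h4
      _ ≤ v ⬝ᵥ v + v ⬝ᵥ v := by rw [hvv']; linarith only [h6, h7]
      _ = 2 * (v ⬝ᵥ v) := by ring
  -- Cauchy–Schwarz tool for averages against the noise
  have hCS : ∀ (a : Fin n → ℝ) (v : Fin d → ℝ),
      ((n:ℝ)⁻¹ * ∑ i, a i * (ξ i ⬝ᵥ v)) ^ 2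
        ≤ ((n:ℝ)⁻¹ * ∑ i, (a i) ^ 2) * (2 * (v ⬝ᵥ v)) := by
    intro a v
    have h1 := Finset.sum_mul_sq_le_sq_mul_sq univ a (fun i => ξ i ⬝ᵥ v)
    have h2 := hM'q v
    have hann : (0:ℝ) ≤ (n:ℝ)⁻¹ * ∑ i, (a i)^2 :=
      mul_nonneg hninv (Finset.sum_nonneg fun i _ => sq_nonneg _)
    calc ((n:ℝ)⁻¹ * ∑ i, a i * (ξ i ⬝ᵥ v))^2
        = (n:ℝ)⁻¹ * (n:ℝ)⁻¹ * (∑ i, a i * (ξ i ⬝ᵥ v))^2 := by ring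
      _ ≤ (n:ℝ)⁻¹ * (n:ℝ)⁻¹ * ((∑ i, (a i)^2) * (∑ i, (ξ i ⬝ᵥ v)^2)) := by
          exact mul_le_mul_of_nonneg_left h1 (by positivity)
      _ = ((n:ℝ)⁻¹ * ∑ i, (a i)^2) * ((n:ℝ)⁻¹ * ∑ i, (ξ i ⬝ᵥ v)^2) := by ring
      _ ≤ ((n:ℝ)⁻¹ * ∑ i, (a i)^2) * (2 * (v ⬝ᵥ v)) :=
          mul_le_mul_of_nonneg_left h2 hann
  -- decompose the data
  have hτ1 : (1:ℝ) ≤ τ^2 := stmt11_one_le_sq hτ100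
  have hdec : ∀ i : Fin n, ∃ ε δ : ℝ,
      (∀ v, x i ⬝ᵥ v = ε * (e₁ ⬝ᵥ v) + δ * (e₂ ⬝ᵥ v) + ρ * (ξ i ⬝ᵥ v)) ∧
      ε ^ 2 ≤ 1 ∧ δ ^ 2 ≤ τ ^ 2 ∧ (i ∈ S → δ = -τ) := by
    intro i
    by_cases hiS : i ∈ S
    · obtain ⟨hqi, hcase⟩ := hS i hiS
      rcases hcase with h | h
      · refine ⟨1, -τ, fun v => ?_, by norm_num, by rw [neg_pow]; norm_num, fun _ => rfl⟩
        rw [h, add_dotProduct, sub_dotProduct, smul_dotProduct, smul_dotProduct, hqi]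
        simp only [smul_eq_mul]; ring
      · refine ⟨-1, -τ, fun v => ?_, by norm_num, by rw [neg_pow]; norm_num, fun _ => rfl⟩
        rw [h, add_dotProduct, sub_dotProduct, smul_dotProduct, smul_dotProduct, neg_dotProduct,
          hqi]
        simp only [smul_eq_mul]; ring
    · have hqτ : (q i * τ)^2 ≤ τ^2 := by
        rcases hq i with h | h
        · rw [h]; simpa using sq_nonneg τ
        · rw [h, one_mul]
      rcases hx i with h | h | h
      · refine ⟨1, -(q i * τ), fun v => ?_, by norm_num, by rw [neg_pow]; norm_num; exact hqτ,
          fun h' => absurd h' hiS⟩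
        rw [h, add_dotProduct, sub_dotProduct, smul_dotProduct, smul_dotProduct]
        simp only [smul_eq_mul]; ring
      · refine ⟨-1, -(q i * τ), fun v => ?_, by norm_num, by rw [neg_pow]; norm_num; exact hqτ,
          fun h' => absurd h' hiS⟩
        rw [h, add_dotProduct, sub_dotProduct, smul_dotProduct, smul_dotProduct, neg_dotProduct]
        simp only [smul_eq_mul]; ring
      · refine ⟨0, 1, fun v => ?_, by norm_num, by linarith only [hτ1], fun h' => absurd h' hiS⟩
        rw [h, add_dotProduct, smul_dotProduct]
        simp only [smul_eq_mul]; ring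
  choose ε δ hxv hε hδ hSδ using hdec
  have hε2 : (n:ℝ)⁻¹ * ∑ i, (ε i) ^ 2 ≤ 1 := by
    have h1 : ∑ i, (ε i)^2 ≤ ∑ i : Fin n, (1:ℝ) := Finset.sum_le_sum fun i _ => hε i
    simp only [Finset.sum_const, Finset.card_univ, Fintype.card_fin, nsmul_eq_mul,
      mul_one] at h1
    calc (n:ℝ)⁻¹ * ∑ i, (ε i)^2 ≤ (n:ℝ)⁻¹ * n := mul_le_mul_of_nonneg_left h1 hninv
      _ = 1 := inv_mul_cancel₀ (ne_of_gt hnpos)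
  have hδ2 : (n:ℝ)⁻¹ * ∑ i, (δ i) ^ 2 ≤ τ ^ 2 := by
    have h1 : ∑ i, (δ i)^2 ≤ ∑ i : Fin n, τ^2 := Finset.sum_le_sum fun i _ => hδ i
    simp only [Finset.sum_const, Finset.card_univ, Fintype.card_fin, nsmul_eq_mul] at h1
    calc (n:ℝ)⁻¹ * ∑ i, (δ i)^2 ≤ (n:ℝ)⁻¹ * ((n:ℝ) * τ^2) := mul_le_mul_of_nonneg_left h1 hninv
      _ = τ^2 := by field_simp
  set N := e₂ ⬝ᵥ M.mulVec e₂ with hNdef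
  set A := e₁ ⬝ᵥ M.mulVec e₂ with hAdef
  have hxe2 : ∀ i, x i ⬝ᵥ e₂ = δ i + ρ * (ξ i ⬝ᵥ e₂) := by
    intro i; rw [hxv i e₂, h12, h22]; ring
  have hxe1 : ∀ i, x i ⬝ᵥ e₁ = ε i + ρ * (ξ i ⬝ᵥ e₁) := by
    intro i
    have h21 : e₂ ⬝ᵥ e₁ = 0 := by rw [dotProduct_comm]; exact h12
    rw [hxv i e₁, h11, h21]; ring
  -- lower bound for N
  have hNlow : τ ^ 2 / 3 - 3 ≤ N := by
    have hNform : N = (n:ℝ)⁻¹ * ∑ i, (δ i + ρ * (ξ i ⬝ᵥ e₂))^2 := by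
      rw [hNdef, hMbil]
      congr 1
      exact Finset.sum_congr rfl fun i _ => by rw [hxe2 i]; ring
    have hsplit : ∀ i, (if i ∈ S then (τ^2 - 2*τ*(ρ * (ξ i ⬝ᵥ e₂))) else 0)
        ≤ (δ i + ρ * (ξ i ⬝ᵥ e₂))^2 := by
      intro i
      by_cases hiS : i ∈ S
      · rw [if_pos hiS]
        have h1 : (δ i + ρ * (ξ i ⬝ᵥ e₂))^2
            = τ^2 - 2*τ*(ρ * (ξ i ⬝ᵥ e₂)) + (ρ * (ξ i ⬝ᵥ e₂))^2 := by
          rw [hSδ i hiS]; ring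
        linarith only [h1, sq_nonneg (ρ * (ξ i ⬝ᵥ e₂))]
      · rw [if_neg hiS]; exact sq_nonneg _
    have hsum1 : ∑ i, (if i ∈ S then (τ^2 - 2*τ*(ρ * (ξ i ⬝ᵥ e₂))) else 0)
        = (S.card : ℝ) * τ^2 - 2*τ*ρ * ∑ i ∈ S, (ξ i ⬝ᵥ e₂) := by
      rw [Finset.sum_ite_mem, Finset.univ_inter]
      rw [Finset.sum_sub_distrib, Finset.sum_const, nsmul_eq_mul, Finset.mul_sum]
      congr 1
      exact Finset.sum_congr rfl fun i _ => by ring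
    -- bound on the partial noise sum
    have hX : (n:ℝ)⁻¹ * ∑ i ∈ S, (ξ i ⬝ᵥ e₂) ≤ 3/2 := by
      set a : Fin n → ℝ := fun i => if i ∈ S then 1 else 0 with hadef
      have ha1 : ∑ i, a i * (ξ i ⬝ᵥ e₂) = ∑ i ∈ S, (ξ i ⬝ᵥ e₂) := by
        rw [show (∑ i, a i * (ξ i ⬝ᵥ e₂)) = ∑ i, (if i ∈ S then (ξ i ⬝ᵥ e₂) else 0) from
          Finset.sum_congr rfl fun i _ => by by_cases hiS : i ∈ S <;> simp [hadef, hiS]]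
        rw [Finset.sum_ite_mem, Finset.univ_inter]
      have ha2 : ∑ i, (a i)^2 = (S.card : ℝ) := by
        rw [show ∑ i, (a i)^2 = ∑ i, (if i ∈ S then (1:ℝ) else 0) from
          Finset.sum_congr rfl fun i _ => by by_cases hiS : i ∈ S <;> simp [hadef, hiS]]
        rw [Finset.sum_ite_mem, Finset.univ_inter, Finset.sum_const, nsmul_eq_mul, mul_one]
      have hcard : ((n:ℝ)⁻¹ * ∑ i, (a i)^2) ≤ 1 := by
        rw [ha2]
        have : (S.card : ℝ) ≤ n := by
          have := Finset.card_le_univ S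
          simp only [Finset.card_univ, Fintype.card_fin] at this
          exact_mod_cast this
        calc (n:ℝ)⁻¹ * (S.card:ℝ) ≤ (n:ℝ)⁻¹ * n := mul_le_mul_of_nonneg_left this hninv
          _ = 1 := inv_mul_cancel₀ (ne_of_gt hnpos)
      have h1 := hCS a e₂
      rw [ha1, h22] at h1
      have h2 : ((n:ℝ)⁻¹ * ∑ i ∈ S, (ξ i ⬝ᵥ e₂))^2 ≤ 2 := by
        calc ((n:ℝ)⁻¹ * ∑ i ∈ S, (ξ i ⬝ᵥ e₂))^2
            ≤ ((n:ℝ)⁻¹ * ∑ i, (a i)^2) * (2 * 1) := by rw [mul_one] at h1 ⊢; exact h1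
          _ ≤ 1 * (2*1) := mul_le_mul_of_nonneg_right hcard (by norm_num)
          _ = 2 := by norm_num
      exact (stmt11_absX h2).2
    -- put together
    have hmain : (n:ℝ)⁻¹ * ((S.card : ℝ) * τ^2 - 2*τ*ρ * ∑ i ∈ S, (ξ i ⬝ᵥ e₂)) ≤ N := by
      rw [hNform]
      rw [← hsum1]
      exact mul_le_mul_of_nonneg_left (Finset.sum_le_sum fun i _ => hsplit i) hninv
    have hfrac : τ^2/3 ≤ (n:ℝ)⁻¹ * (S.card : ℝ) * τ^2 := by
      have h1 : (1:ℝ)/3 ≤ (n:ℝ)⁻¹ * (S.card : ℝ) := by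
        calc (1:ℝ)/3 = (n:ℝ)⁻¹ * ((n:ℝ) / 3) := by field_simp
          _ ≤ (n:ℝ)⁻¹ * (S.card:ℝ) := mul_le_mul_of_nonneg_left hScard hninv
      calc τ^2/3 = 1/3 * τ^2 := by ring
        _ ≤ (n:ℝ)⁻¹ * (S.card : ℝ) * τ^2 := mul_le_mul_of_nonneg_right h1 (sq_nonneg τ)
    have hexpand : (n:ℝ)⁻¹ * ((S.card : ℝ) * τ^2 - 2*τ*ρ * ∑ i ∈ S, (ξ i ⬝ᵥ e₂))
        = (n:ℝ)⁻¹ * (S.card : ℝ) * τ^2 - 2*τ*ρ * ((n:ℝ)⁻¹ * ∑ i ∈ S, (ξ i ⬝ᵥ e₂)) := by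
      ring
    have hτρX : 2*τ*ρ * ((n:ℝ)⁻¹ * ∑ i ∈ S, (ξ i ⬝ᵥ e₂)) ≤ 3 := by
      have h2 : 2*τ*ρ = 2 := by rw [show 2*τ*ρ = 2*(ρ*τ) from by ring, hρτ]; norm_num
      rw [h2]
      linarith only [hX]
    rw [hexpand] at hmain
    linarith only [hmain, hfrac, hτρX]
  -- bound for A
  have hA2 : A ^ 2 ≤ (τ + 3) ^ 2 := by
    set P1 := (n:ℝ)⁻¹ * ∑ i, ε i * δ i with hP1
    set P2 := (n:ℝ)⁻¹ * ∑ i, ε i * (ξ i ⬝ᵥ e₂) with hP2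
    set P3 := (n:ℝ)⁻¹ * ∑ i, δ i * (ξ i ⬝ᵥ e₁) with hP3
    set P4 := (n:ℝ)⁻¹ * ∑ i, (ξ i ⬝ᵥ e₁) * (ξ i ⬝ᵥ e₂) with hP4
    have hAform : A = P1 + ρ * P2 + ρ * P3 + ρ^2 * P4 := by
      rw [hAdef, hMbil, hP1, hP2, hP3, hP4]
      have : ∀ i : Fin n, (x i ⬝ᵥ e₁) * (x i ⬝ᵥ e₂)
          = ε i * δ i + ρ * (ε i * (ξ i ⬝ᵥ e₂)) + ρ * (δ i * (ξ i ⬝ᵥ e₁))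
            + ρ^2 * ((ξ i ⬝ᵥ e₁) * (ξ i ⬝ᵥ e₂)) := by
        intro i; rw [hxe1 i, hxe2 i]; ring
      rw [show (∑ i, (x i ⬝ᵥ e₁) * (x i ⬝ᵥ e₂))
          = ∑ i, (ε i * δ i + ρ * (ε i * (ξ i ⬝ᵥ e₂)) + ρ * (δ i * (ξ i ⬝ᵥ e₁))
            + ρ^2 * ((ξ i ⬝ᵥ e₁) * (ξ i ⬝ᵥ e₂))) from Finset.sum_congr rfl fun i _ => this i]
      rw [Finset.sum_add_distrib, Finset.sum_add_distrib, Finset.sum_add_distrib,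
        ← Finset.mul_sum, ← Finset.mul_sum, ← Finset.mul_sum]
      ring
    -- |P1| ≤ τ
    have hP1b : -τ ≤ P1 ∧ P1 ≤ τ := by
      apply stmt11_sq_le hτpos.le
      have h1 := Finset.sum_mul_sq_le_sq_mul_sq univ ε δ
      calc P1^2 = (n:ℝ)⁻¹ * (n:ℝ)⁻¹ * (∑ i, ε i * δ i)^2 := by rw [hP1]; ring
        _ ≤ (n:ℝ)⁻¹ * (n:ℝ)⁻¹ * ((∑ i, (ε i)^2) * (∑ i, (δ i)^2)) :=
            mul_le_mul_of_nonneg_left h1 (by positivity)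
        _ = ((n:ℝ)⁻¹ * ∑ i, (ε i)^2) * ((n:ℝ)⁻¹ * ∑ i, (δ i)^2) := by ring
        _ ≤ 1 * τ^2 := by
            apply mul_le_mul hε2 hδ2 (mul_nonneg hninv
              (Finset.sum_nonneg fun i _ => sq_nonneg _)) (by norm_num)
        _ = τ^2 := by ring
    -- |P2| ≤ 3/2
    have hP2b : -(3/2) ≤ P2 ∧ P2 ≤ 3/2 := by
      apply stmt11_absX
      have h1 := hCS ε e₂
      rw [h22] at h1
      calc P2^2 ≤ ((n:ℝ)⁻¹ * ∑ i, (ε i)^2) * (2*1) := h1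
        _ ≤ 1 * (2*1) := mul_le_mul_of_nonneg_right hε2 (by norm_num)
        _ = 2 := by norm_num
    -- |P3| ≤ 3τ/2
    have hP3b : -(3*τ/2) ≤ P3 ∧ P3 ≤ 3*τ/2 := by
      apply stmt11_sq_le (by positivity)
      have h1 := hCS δ e₁
      rw [h11] at h1
      calc P3^2 ≤ ((n:ℝ)⁻¹ * ∑ i, (δ i)^2) * (2*1) := h1
        _ ≤ τ^2 * (2*1) := mul_le_mul_of_nonneg_right hδ2 (by norm_num)
        _ ≤ (3*τ/2)^2 := by nlinarith [sq_nonneg τ]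
    -- |P4| ≤ 2
    have hP4b : -2 ≤ P4 ∧ P4 ≤ 2 := by
      have hu := hM'q e₁
      have ht := hM'q e₂
      rw [h11] at hu
      rw [h22] at ht
      have hup : ∀ i : Fin n, (ξ i ⬝ᵥ e₁) * (ξ i ⬝ᵥ e₂)
          ≤ ((ξ i ⬝ᵥ e₁)^2 + (ξ i ⬝ᵥ e₂)^2)/2 := fun i => stmt11_mul_le_half_sq _ _
      have hdn : ∀ i : Fin n, -((ξ i ⬝ᵥ e₁) * (ξ i ⬝ᵥ e₂))
          ≤ ((ξ i ⬝ᵥ e₁)^2 + (ξ i ⬝ᵥ e₂)^2)/2 := fun i => stmt11_neg_mul_le_half_sq _ _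
      have hhalf : (n:ℝ)⁻¹ * ∑ i, ((ξ i ⬝ᵥ e₁)^2 + (ξ i ⬝ᵥ e₂)^2)/2 ≤ 2 := by
        have : ∑ i, ((ξ i ⬝ᵥ e₁)^2 + (ξ i ⬝ᵥ e₂)^2)/2
            = (∑ i, (ξ i ⬝ᵥ e₁)^2 + ∑ i, (ξ i ⬝ᵥ e₂)^2)/2 := by
          rw [← Finset.sum_add_distrib, ← Finset.sum_div]
        rw [this]
        have h2 : (n:ℝ)⁻¹ * ((∑ i, (ξ i ⬝ᵥ e₁)^2 + ∑ i, (ξ i ⬝ᵥ e₂)^2)/2)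
            = ((n:ℝ)⁻¹ * ∑ i, (ξ i ⬝ᵥ e₁)^2 + (n:ℝ)⁻¹ * ∑ i, (ξ i ⬝ᵥ e₂)^2)/2 := by ring
        rw [h2]
        linarith only [hu, ht]
      constructor
      · have h1 : -P4 ≤ (n:ℝ)⁻¹ * ∑ i, ((ξ i ⬝ᵥ e₁)^2 + (ξ i ⬝ᵥ e₂)^2)/2 := by
          rw [hP4, ← mul_neg, ← Finset.sum_neg_distrib]
          exact mul_le_mul_of_nonneg_left (Finset.sum_le_sum fun i _ => hdn i) hninv
        linarith only [h1, hhalf]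
      · have h1 : P4 ≤ (n:ℝ)⁻¹ * ∑ i, ((ξ i ⬝ᵥ e₁)^2 + (ξ i ⬝ᵥ e₂)^2)/2 := by
          rw [hP4]
          exact mul_le_mul_of_nonneg_left (Finset.sum_le_sum fun i _ => hup i) hninv
        linarith only [h1, hhalf]
    -- combine
    exact stmt11_Acomb ρ τ A P1 P2 P3 P4 hρτ hρpos hρ100 hτpos hAform
      hP1b.1 hP1b.2 hP2b.1 hP2b.2 hP3b.1 hP3b.2 hP4b.1 hP4b.2
  have hA2nn : 0 ≤ A^2 := sq_nonneg A
  -- the residual vector r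
  set r := M.mulVec e₂ - A • e₁ - N • e₂ with hrdef
  set R2 := r ⬝ᵥ r with hR2def
  have h21 : e₂ ⬝ᵥ e₁ = 0 := by rw [dotProduct_comm]; exact h12
  have hre1 : e₁ ⬝ᵥ r = 0 := by
    rw [hrdef, dotProduct_sub, dotProduct_sub, dotProduct_smul, dotProduct_smul, h11, h12]
    simp only [smul_eq_mul]
    rw [← hAdef]; ring
  have hre2 : e₂ ⬝ᵥ r = 0 := by
    rw [hrdef, dotProduct_sub, dotProduct_sub, dotProduct_smul, dotProduct_smul, h21, h22]
    simp only [smul_eq_mul]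
    rw [← hNdef]; ring
  have hr1 : r ⬝ᵥ e₁ = 0 := by rw [dotProduct_comm]; exact hre1
  have hr2 : r ⬝ᵥ e₂ = 0 := by rw [dotProduct_comm]; exact hre2
  have hR2nn : 0 ≤ R2 := stmt11_dot_nonneg r
  have hR2 : R2 ≤ 4 := by
    have hrr : R2 = r ⬝ᵥ M.mulVec e₂ := by
      rw [hR2def]
      conv_lhs => rw [hrdef]
      rw [dotProduct_sub, dotProduct_sub, dotProduct_smul, dotProduct_smul]
      simp only [smul_eq_mul]
      rw [hr1, hr2]; ring
    have hxr : ∀ i, x i ⬝ᵥ r = ρ * (ξ i ⬝ᵥ r) := by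
      intro i; rw [hxv i r, hre1, hre2]; ring
    set Y1 := (n:ℝ)⁻¹ * ∑ i, δ i * (ξ i ⬝ᵥ r) with hY1
    set Y2 := (n:ℝ)⁻¹ * ∑ i, (ξ i ⬝ᵥ e₂) * (ξ i ⬝ᵥ r) with hY2
    have hform : R2 = ρ * Y1 + ρ^2 * Y2 := by
      rw [hrr, hMbil, hY1, hY2]
      have : ∀ i : Fin n, (x i ⬝ᵥ r) * (x i ⬝ᵥ e₂)
          = ρ * (δ i * (ξ i ⬝ᵥ r)) + ρ^2 * ((ξ i ⬝ᵥ e₂) * (ξ i ⬝ᵥ r)) := by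
        intro i; rw [hxr i, hxe2 i]; ring
      rw [show (∑ i, (x i ⬝ᵥ r) * (x i ⬝ᵥ e₂))
          = ∑ i, (ρ * (δ i * (ξ i ⬝ᵥ r)) + ρ^2 * ((ξ i ⬝ᵥ e₂) * (ξ i ⬝ᵥ r)))
          from Finset.sum_congr rfl fun i _ => this i]
      rw [Finset.sum_add_distrib, ← Finset.mul_sum, ← Finset.mul_sum]
      ring
    have hY1b : Y1^2 ≤ τ^2 * (2*R2) := by
      have h1 := hCS δ r
      rw [← hR2def] at h1
      calc Y1^2 ≤ ((n:ℝ)⁻¹ * ∑ i, (δ i)^2) * (2*R2) := h1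
        _ ≤ τ^2 * (2*R2) := mul_le_mul_of_nonneg_right hδ2 (by linarith only [hR2nn])
    have hY2b : Y2^2 ≤ 2 * (2*R2) := by
      have h1 := hCS (fun i => ξ i ⬝ᵥ e₂) r
      rw [← hR2def] at h1
      have h2 : (n:ℝ)⁻¹ * ∑ i, (ξ i ⬝ᵥ e₂)^2 ≤ 2 := by
        have := hM'q e₂; rw [h22, mul_one] at this; exact this
      calc Y2^2 ≤ ((n:ℝ)⁻¹ * ∑ i, (ξ i ⬝ᵥ e₂)^2) * (2*R2) := h1
        _ ≤ 2 * (2*R2) := mul_le_mul_of_nonneg_right h2 (by linarith only [hR2nn])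
    exact stmt11_R2bound R2 Y1 Y2 ρ τ hρτ hρpos hρ100 hR2nn hform hY1b hY2b
  set D2 := (M.mulVec e₂) ⬝ᵥ (M.mulVec e₂) with hD2def
  have hD2 : D2 = A ^ 2 + N ^ 2 + R2 := by
    have hMe₂ : M.mulVec e₂ = r + A • e₁ + N • e₂ := by
      rw [hrdef]; abel
    rw [hD2def]
    conv_lhs => rw [hMe₂]
    rw [add_dotProduct, add_dotProduct, smul_dotProduct, smul_dotProduct,
      dotProduct_add, dotProduct_add, dotProduct_add, dotProduct_add, dotProduct_add,
      dotProduct_add, dotProduct_smul, dotProduct_smul, dotProduct_smul, dotProduct_smul,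
      dotProduct_smul, dotProduct_smul]
    simp only [smul_eq_mul]
    rw [h11, h22, h12, h21, hre1, hre2, hr1, hr2, ← hR2def]
    ring
  -- quadratic form on the orthogonal complement of span{e₁,e₂}
  have hperp : ∀ w : Fin d → ℝ, e₁ ⬝ᵥ w = 0 → e₂ ⬝ᵥ w = 0 →
      w ⬝ᵥ M.mulVec w ≤ 2 * ρ ^ 2 * (w ⬝ᵥ w) := by
    intro w hw1 hw2
    have hxw : ∀ i, x i ⬝ᵥ w = ρ * (ξ i ⬝ᵥ w) := by
      intro i; rw [hxv i w, hw1, hw2]; ring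
    rw [hMbil]
    have h1 : (n:ℝ)⁻¹ * ∑ i, (x i ⬝ᵥ w) * (x i ⬝ᵥ w)
        = ρ^2 * ((n:ℝ)⁻¹ * ∑ i, (ξ i ⬝ᵥ w)^2) := by
      rw [show (∑ i, (x i ⬝ᵥ w) * (x i ⬝ᵥ w)) = ∑ i, ρ^2 * (ξ i ⬝ᵥ w)^2 from
        Finset.sum_congr rfl fun i _ => by rw [hxw i]; ring]
      rw [← Finset.mul_sum]; ring
    rw [h1]
    calc ρ^2 * ((n:ℝ)⁻¹ * ∑ i, (ξ i ⬝ᵥ w)^2) ≤ ρ^2 * (2 * (w ⬝ᵥ w)) :=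
        mul_le_mul_of_nonneg_left (hM'q w) (sq_nonneg ρ)
      _ = 2 * ρ^2 * (w ⬝ᵥ w) := by ring
  have hpos : ∀ v : Fin d → ℝ, 0 ≤ v ⬝ᵥ M.mulVec v := by
    intro v
    rw [hMbil]
    exact mul_nonneg hninv (Finset.sum_nonneg fun i _ => mul_self_nonneg _)
  -- main numeric consequence
  obtain ⟨hD2pos, hN2, h9ρ, harith⟩ :=
    stmt11_arith ρ τ N (A^2) R2 D2 hρτ hρpos hρ100 hτ100 hNlow hA2 hA2nn hR2nn hR2 hD2
  -- spectral decomposition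
  have hherm : M.IsHermitian := by
    rw [Matrix.IsHermitian]
    ext a b
    simp only [Matrix.conjTranspose_apply, hMdef, Matrix.smul_apply, Matrix.sum_apply,
      vecMulVec_apply, smul_eq_mul, star_trivial]
    rw [Finset.mul_sum, Finset.mul_sum]
    exact Finset.sum_congr rfl fun i _ => by ring
  set u : Fin d → Fin d → ℝ := fun j => ⇑(hherm.eigenvectorBasis j) with hudef
  set μ : Fin d → ℝ := hherm.eigenvalues with hμdef
  have heig : ∀ j, M.mulVec (u j) = μ j • u j := fun j => hherm.mulVec_eigenvectorBasis j
  have hortho : ∀ i j, u i ⬝ᵥ u j = if i = j then 1 else 0 := by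
    intro i j
    have h := orthonormal_iff_ite.mp hherm.eigenvectorBasis.orthonormal i j
    simp only [PiLp.inner_apply, RCLike.inner_apply, starRingEnd_apply, star_trivial] at h
    simpa [hudef, dotProduct, mul_comm] using h
  have hexp : ∀ v w : Fin d → ℝ, ∑ j, (u j ⬝ᵥ v) * (u j ⬝ᵥ w) = v ⬝ᵥ w := by
    intro v w
    have h := hherm.eigenvectorBasis.sum_inner_mul_inner
      (WithLp.toLp 2 v) (WithLp.toLp 2 w)
    simp only [PiLp.inner_apply, RCLike.inner_apply, starRingEnd_apply, star_trivial] at h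
    simpa [hudef, dotProduct, mul_comm] using h
  have hsym : ∀ j (v : Fin d → ℝ), u j ⬝ᵥ M.mulVec v = μ j * (u j ⬝ᵥ v) := by
    intro j v
    have h1 : u j ⬝ᵥ M.mulVec v = v ⬝ᵥ M.mulVec (u j) := by
      rw [hMbil, hMbil]
      exact congrArg _ (Finset.sum_congr rfl fun i _ => mul_comm _ _)
    rw [h1, heig j, dotProduct_smul, smul_eq_mul, dotProduct_comm]
  set c : Fin d → ℝ := fun j => u j ⬝ᵥ e₂ with hcdef
  have F1 : ∑ j, (c j) ^ 2 = 1 := by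
    have h := hexp e₂ e₂
    rw [h22] at h
    rw [← h]
    exact Finset.sum_congr rfl fun j _ => by simp only [hcdef]; ring
  have F2 : ∑ j, μ j * (c j) ^ 2 = N := by
    have h := hexp e₂ (M.mulVec e₂)
    rw [← hNdef] at h
    rw [← h]
    refine Finset.sum_congr rfl fun j _ => ?_
    rw [hsym j e₂]
    simp only [hcdef]; ring
  have F3 : ∑ j, (μ j) ^ 2 * (c j) ^ 2 = D2 := by
    have h := hexp (M.mulVec e₂) (M.mulVec e₂)
    rw [← hD2def] at h
    rw [← h]
    refine Finset.sum_congr rfl fun j _ => ?_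
    rw [hsym j e₂]
    simp only [hcdef]; ring
  have F4 : ∀ j, 0 ≤ μ j := by
    intro j
    have h := hpos (u j)
    rw [hsym j (u j), hortho j j, if_pos rfl, mul_one] at h
    exact h
  -- select the two largest eigenvalues
  obtain ⟨j₁, -, hj₁⟩ := Finset.exists_max_image (univ : Finset (Fin d)) μ
    ⟨⟨0, by omega⟩, mem_univ _⟩
  have hne : ∃ a : Fin d, a ≠ j₁ := by
    set i0 : Fin d := ⟨0, by omega⟩
    set i1 : Fin d := ⟨1, by omega⟩
    have h01 : i0 ≠ i1 := by simp [i0, i1, Fin.ext_iff]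
    by_cases h : j₁ = i0
    · exact ⟨i1, by rw [h]; exact fun hh => h01 hh.symm⟩
    · exact ⟨i0, fun hh => h (hh.symm)⟩
  obtain ⟨a₀, ha₀⟩ := hne
  obtain ⟨j₂, hj₂mem, hj₂⟩ := Finset.exists_max_image (univ.erase j₁) μ
    ⟨a₀, Finset.mem_erase.mpr ⟨ha₀, mem_univ _⟩⟩
  have hj12 : j₂ ≠ j₁ := (Finset.mem_erase.mp hj₂mem).1
  -- all other eigenvalues are at most 2ρ²
  have hsmall : ∀ j, j ≠ j₁ → j ≠ j₂ → μ j ≤ 2 * ρ ^ 2 := by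
    intro j hjj1 hjj2
    by_contra hcon
    push_neg at hcon
    have hb1 : 2*ρ^2 < μ j₁ := lt_of_lt_of_le hcon (hj₁ j (mem_univ _))
    have hb2 : 2*ρ^2 < μ j₂ :=
      lt_of_lt_of_le hcon (hj₂ j (Finset.mem_erase.mpr ⟨hjj1, mem_univ _⟩))
    set J : Fin 3 → Fin d := ![j₁, j₂, j] with hJ
    set B : Matrix (Fin 2) (Fin 3) ℝ := fun p k => (![e₁, e₂] p) ⬝ᵥ u (J k) with hB
    obtain ⟨z, hz0, hzker⟩ : ∃ z : Fin 3 → ℝ, z ≠ 0 ∧ B.mulVec z = 0 := by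
      have h : ¬ Function.Injective B.mulVecLin := by
        intro h
        have := LinearMap.finrank_le_finrank_of_injective h
        simp [Module.finrank_pi] at this
      rw [← LinearMap.ker_eq_bot] at h
      obtain ⟨z, hz, hz0⟩ := Submodule.ne_bot_iff _ |>.mp h
      exact ⟨z, hz0, hz⟩
    set w : Fin d → ℝ := z 0 • u j₁ + z 1 • u j₂ + z 2 • u j with hw
    have hker0 : z 0 * (e₁ ⬝ᵥ u j₁) + z 1 * (e₁ ⬝ᵥ u j₂) + z 2 * (e₁ ⬝ᵥ u j) = 0 := by
      have h := congrFun hzker 0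
      simp only [Matrix.mulVec, dotProduct, Pi.zero_apply, Fin.sum_univ_three, hB] at h
      simpa [hJ, mul_comm, dotProduct] using h
    have hker1 : z 0 * (e₂ ⬝ᵥ u j₁) + z 1 * (e₂ ⬝ᵥ u j₂) + z 2 * (e₂ ⬝ᵥ u j) = 0 := by
      have h := congrFun hzker 1
      simp only [Matrix.mulVec, dotProduct, Pi.zero_apply, Fin.sum_univ_three, hB] at h
      simpa [hJ, mul_comm, dotProduct] using h
    have hwe1 : e₁ ⬝ᵥ w = 0 := by
      rw [hw, dotProduct_add, dotProduct_add, dotProduct_smul, dotProduct_smul, dotProduct_smul]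
      simpa using hker0
    have hwe2 : e₂ ⬝ᵥ w = 0 := by
      rw [hw, dotProduct_add, dotProduct_add, dotProduct_smul, dotProduct_smul, dotProduct_smul]
      simpa using hker1
    have h12' : j₁ ≠ j₂ := hj12.symm
    have h13 : j₁ ≠ j := fun h => hjj1 h.symm
    have h23 : j₂ ≠ j := fun h => hjj2 h.symm
    have hww : w ⬝ᵥ w = z 0^2 + z 1^2 + z 2^2 := by
      rw [hw]
      simp only [dotProduct_add, add_dotProduct, dotProduct_smul, smul_dotProduct, smul_eq_mul,
        hortho, if_pos rfl, if_true, if_neg h12', if_neg h13, if_neg h23,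
        if_neg (Ne.symm h12'), if_neg (Ne.symm h13), if_neg (Ne.symm h23)]
      ring
    have hMw : M.mulVec w = z 0 • (μ j₁ • u j₁) + z 1 • (μ j₂ • u j₂) + z 2 • (μ j • u j) := by
      rw [hw, Matrix.mulVec_add, Matrix.mulVec_add, Matrix.mulVec_smul, Matrix.mulVec_smul,
        Matrix.mulVec_smul, heig, heig, heig]
    have hwMw : w ⬝ᵥ M.mulVec w = μ j₁ * z 0^2 + μ j₂ * z 1^2 + μ j * z 2^2 := by
      rw [hMw, hw]
      simp only [dotProduct_add, add_dotProduct, dotProduct_smul, smul_dotProduct, smul_eq_mul,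
        hortho, if_pos rfl, if_true, if_neg h12', if_neg h13, if_neg h23,
        if_neg (Ne.symm h12'), if_neg (Ne.symm h13), if_neg (Ne.symm h23)]
      ring
    have hple := hperp w hwe1 hwe2
    rw [hwMw, hww] at hple
    obtain ⟨k, hk⟩ := Function.ne_iff.mp hz0
    have ht1 : 0 ≤ (μ j₁ - 2*ρ^2) * z 0^2 :=
      mul_nonneg (by linarith only [hb1]) (sq_nonneg _)
    have ht2 : 0 ≤ (μ j₂ - 2*ρ^2) * z 1^2 :=
      mul_nonneg (by linarith only [hb2]) (sq_nonneg _)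
    have ht3 : 0 ≤ (μ j - 2*ρ^2) * z 2^2 :=
      mul_nonneg (by linarith only [hcon]) (sq_nonneg _)
    have hzk : 0 < z k^2 := lt_of_le_of_ne (sq_nonneg _) (Ne.symm (pow_ne_zero 2 hk))
    fin_cases k
    · have : 0 < (μ j₁ - 2*ρ^2) * z 0^2 := mul_pos (by linarith only [hb1]) hzk
      linarith only [hple, ht2, ht3, this]
    · have : 0 < (μ j₂ - 2*ρ^2) * z 1^2 := mul_pos (by linarith only [hb2]) hzk
      linarith only [hple, ht1, ht3, this]
    · have : 0 < (μ j - 2*ρ^2) * z 2^2 := mul_pos (by linarith only [hcon]) hzk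
      linarith only [hple, ht1, ht2, this]
  -- splitting sums at j₁ and j₂
  have split : ∀ f : Fin d → ℝ,
      ∑ j, f j = f j₁ + f j₂ + ∑ j ∈ (univ.erase j₁).erase j₂, f j := by
    intro f
    have h1 : ∑ j, f j = f j₁ + ∑ j ∈ univ.erase j₁, f j :=
      (Finset.add_sum_erase _ f (mem_univ j₁)).symm
    have h2 : ∑ j ∈ univ.erase j₁, f j = f j₂ + ∑ j ∈ (univ.erase j₁).erase j₂, f j :=
      (Finset.add_sum_erase _ f hj₂mem).symm
    rw [h1, h2]; ring
  set T := μ j₁ * (c j₁) ^ 2 + μ j₂ * (c j₂) ^ 2 with hTdef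
  have step1 : N ≤ T + 2 * ρ ^ 2 := by
    have e1 := split (fun j => μ j * (c j)^2)
    rw [F2] at e1
    have htail1 : ∑ j ∈ (univ.erase j₁).erase j₂, μ j * (c j)^2
        ≤ ∑ j ∈ (univ.erase j₁).erase j₂, 2*ρ^2 * (c j)^2 := by
      refine Finset.sum_le_sum fun j hj => ?_
      obtain ⟨hjj2, hj'⟩ := Finset.mem_erase.mp hj
      obtain ⟨hjj1, -⟩ := Finset.mem_erase.mp hj'
      exact mul_le_mul_of_nonneg_right (hsmall j hjj1 hjj2) (sq_nonneg _)
    have htail2 : ∑ j ∈ (univ.erase j₁).erase j₂, 2*ρ^2 * (c j)^2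
        = 2*ρ^2 * ∑ j ∈ (univ.erase j₁).erase j₂, (c j)^2 := by
      rw [Finset.mul_sum]
    have htail3 : ∑ j ∈ (univ.erase j₁).erase j₂, (c j)^2 ≤ 1 := by
      rw [← F1]
      exact Finset.sum_le_sum_of_subset_of_nonneg (Finset.subset_univ _)
        (fun j _ _ => sq_nonneg _)
    have htail4 : 2*ρ^2 * ∑ j ∈ (univ.erase j₁).erase j₂, (c j)^2 ≤ 2*ρ^2 * 1 :=
      mul_le_mul_of_nonneg_left htail3 (by positivity)
    rw [hTdef]
    linarith only [e1, htail1, htail2, htail4]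
  have step2 : T ^ 2 ≤ D2 * ((c j₁) ^ 2 + (c j₂) ^ 2) := by
    have h3 : (μ j₁ * c j₁)^2 + (μ j₂ * c j₂)^2 ≤ D2 := by
      have e3 := split (fun j => (μ j)^2 * (c j)^2)
      rw [F3] at e3
      have htail : 0 ≤ ∑ j ∈ (univ.erase j₁).erase j₂, (μ j)^2 * (c j)^2 :=
        Finset.sum_nonneg fun j _ => mul_nonneg (sq_nonneg _) (sq_nonneg _)
      linarith only [e3, htail]
    calc T^2 = ((μ j₁ * c j₁) * (c j₁) + (μ j₂ * c j₂) * (c j₂))^2 := by rw [hTdef]; ring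
      _ ≤ ((μ j₁ * c j₁)^2 + (μ j₂ * c j₂)^2) * ((c j₁)^2 + (c j₂)^2) :=
          stmt11_CS2 _ _ _ _
      _ ≤ D2 * ((c j₁)^2 + (c j₂)^2) :=
          mul_le_mul_of_nonneg_right h3 (by positivity)
  have key : (N - 2 * ρ ^ 2) ^ 2 ≤ D2 * ((c j₁) ^ 2 + (c j₂) ^ 2) := by
    have hNT : N - 2 * ρ ^ 2 ≤ T := by linarith only [step1]
    calc (N - 2 * ρ ^ 2) ^ 2 ≤ T ^ 2 := pow_le_pow_left₀ hN2 hNT 2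
      _ ≤ _ := step2
  have hs : (1 - 9 * ρ) ^ 2 ≤ (c j₁) ^ 2 + (c j₂) ^ 2 := by
    rw [← mul_le_mul_iff_right₀ hD2pos]
    calc D2 * (1 - 9 * ρ) ^ 2 = (1 - 9 * ρ) ^ 2 * D2 := mul_comm _ _
      _ ≤ (N - 2 * ρ ^ 2) ^ 2 := harith
      _ ≤ D2 * ((c j₁) ^ 2 + (c j₂) ^ 2) := key
  refine ⟨u j₁, u j₂, μ j₁, μ j₂, ?_, ?_, ?_, heig j₁, heig j₂, hj₁ j₂ (mem_univ _), ?_, ?_⟩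
  · simpa using hortho j₁ j₁
  · simpa using hortho j₂ j₂
  · rw [hortho j₁ j₂]; exact if_neg fun h => hj12 h.symm
  · -- minimality of the rest of the spectrum
    intro μ' w hwne hMw hw1 hw2
    have ha : ∀ j, μ j * (u j ⬝ᵥ w) = μ' * (u j ⬝ᵥ w) := by
      intro j
      rw [← hsym j w, hMw, dotProduct_smul, smul_eq_mul]
    have hex : ∃ j, (u j ⬝ᵥ w) ≠ 0 := by
      by_contra hall
      push_neg at hall
      have h0 : w ⬝ᵥ w = 0 := by
        rw [← hexp w w]
        exact Finset.sum_eq_zero fun j _ => by rw [hall j, zero_mul]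
      exact absurd h0 (ne_of_gt (stmt11_dot_pos hwne))
    obtain ⟨j, hj⟩ := hex
    have hμj : μ j = μ' := mul_right_cancel₀ hj (ha j)
    have hjj1 : j ≠ j₁ := by
      intro h
      apply hj
      rw [h, dotProduct_comm]
      exact hw1
    rw [← hμj]
    exact hj₂ j (Finset.mem_erase.mpr ⟨hjj1, mem_univ _⟩)
  · -- the projection bound
    rw [← hρdef, ge_iff_le, dotProduct_comm e₂ (u j₁), dotProduct_comm e₂ (u j₂)]
    rw [show (1:ℝ) - 9 * ρ = Real.sqrt ((1 - 9*ρ)^2) from (Real.sqrt_sq h9ρ).symm]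
    exact Real.sqrt_le_sqrt hs
end

section
/- There exists $d_0 \in \mathbb{N}$ such that for every integer $d \ge d_0$ the following holds. Set $\rho = d^{-1/5}$ and $\tau = d^{1/5}$, let $e_1, e_2 \in \mathbb{R}^d$ be orthonormal, let $n_1, n_2 \ge 1$ and $1 \le n_3 \le d^{1/5}$, and consider the labeled dataset with class-1 points $x_i^{(1)} = e_1 - q_i^{(1)} \tau e_2 + \rho \xi_i^{(1)}$ ($i \in [n_1]$, $q_i^{(1)} \in \{0,1\}$), class-2 points $x_i^{(2)} = -e_1 - q_i^{(2)} \tau e_2 + \rho \xi_i^{(2)}$ ($i \in [n_2]$, $q_i^{(2)} \in \{0,1\}$), and class-3 points $x_i^{(3)} = e_2 + \rho \xi_i^{(3)}$ ($i \in [n_3]$). Suppose: (i) every noise vector satisfies $|\langle \xi_i^{(k)}, e_1 \rangle| \le d^{1/10}$, $|\langle \xi_i^{(k)}, e_2 \rangle| \le d^{1/10}$, $|\|\xi_i^{(k)}\|_2^2 - d| \le 4 d^{3/4}$, and $|\langle \xi_i^{(k)}, \xi_j^{(l)} \rangle| \le 3 d^{3/5}$ for distinct index pairs; (ii) the set $S_1$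 of class-1 indices with $q_i^{(1)} = 0$ and the set $S_2$ of class-2 indices with $q_i^{(2)} = 0$ are nonempty, and $\| \frac{1}{|S_1|} \sum_{i \in S_1} x_i^{(1)} - e_1 \|_2 \le d^{-1/10}$ and $\| \frac{1}{|S_2|} \sum_{i \in S_2} x_i^{(2)} + e_1 \|_2 \le d^{-1/10}$. Let $(w_1, w_2, w_3) \in (\mathbb{R}^d)^3$ be any triple that minimizes $\|w_1\|_2^2 + \|w_2\|_2^2 + \|w_3\|_2^2$ subject to the margin constraints $\langle w_y, x \rangle \ge \langle w_{y'}, x \rangle + 1$ for every datapoint $x$ of class $y$ and every $y' \ne y$. Then $|\langle e_2, w_i \rangle| \le 16 \, d^{-1/20}$ for each $i \in [3]$. -/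
open Matrix
open scoped Classical

private lemma aux_sum_dp {m : Type*} [Fintype m] {ι : Type*} (s : Finset ι)
    (f : ι → m → ℝ) (v : m → ℝ) : (∑ j ∈ s, f j) ⬝ᵥ v = ∑ j ∈ s, f j ⬝ᵥ v := by
  simp only [dotProduct, Finset.sum_apply, Finset.sum_mul]
  exact Finset.sum_comm

private lemma aux_dp_sum {m : Type*} [Fintype m] {ι : Type*} (s : Finset ι)
    (f : ι → m → ℝ) (v : m → ℝ) : v ⬝ᵥ (∑ j ∈ s, f j) = ∑ j ∈ s, v ⬝ᵥ f j := by
  rw [dotProduct_comm, aux_sum_dp]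
  exact Finset.sum_congr rfl fun j _ => dotProduct_comm _ _

private lemma aux_dp_nonneg {m : Type*} [Fintype m] (v : m → ℝ) : 0 ≤ v ⬝ᵥ v :=
  Finset.sum_nonneg fun _ _ => mul_self_nonneg _

private lemma aux_cs {m : Type*} [Fintype m] (u v : m → ℝ) :
    (u ⬝ᵥ v) ^ 2 ≤ (u ⬝ᵥ u) * (v ⬝ᵥ v) := by
  simpa [dotProduct, sq] using Finset.sum_mul_sq_le_sq_mul_sq Finset.univ u v

private lemma aux_dp_abs_le {m : Type*} [Fintype m] (u v : m → ℝ) {a b : ℝ}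
    (ha : 0 ≤ a) (hb : 0 ≤ b) (hu : u ⬝ᵥ u ≤ a ^ 2) (hv : v ⬝ᵥ v ≤ b ^ 2) :
    |u ⬝ᵥ v| ≤ a * b := by
  refine abs_le_of_sq_le_sq ?_ (mul_nonneg ha hb)
  calc (u ⬝ᵥ v) ^ 2 ≤ (u ⬝ᵥ u) * (v ⬝ᵥ v) := aux_cs u v
    _ ≤ a ^ 2 * b ^ 2 :=
        mul_le_mul hu hv (aux_dp_nonneg v) (le_trans (aux_dp_nonneg u) hu)
    _ = (a * b) ^ 2 := by ring

private lemma aux_bessel {m : Type*} [Fintype m] (e₁ e₂ v : m → ℝ)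
    (h11 : e₁ ⬝ᵥ e₁ = 1) (h22 : e₂ ⬝ᵥ e₂ = 1) (h12 : e₁ ⬝ᵥ e₂ = 0) :
    (e₁ ⬝ᵥ v) ^ 2 + (e₂ ⬝ᵥ v) ^ 2 ≤ v ⬝ᵥ v := by
  have h21 : e₂ ⬝ᵥ e₁ = 0 := by rw [dotProduct_comm]; exact h12
  have hv1 : v ⬝ᵥ e₁ = e₁ ⬝ᵥ v := dotProduct_comm _ _
  have hv2 : v ⬝ᵥ e₂ = e₂ ⬝ᵥ v := dotProduct_comm _ _
  have h := aux_dp_nonneg (v - (e₁ ⬝ᵥ v) • e₁ - (e₂ ⬝ᵥ v) • e₂)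
  simp only [sub_dotProduct, dotProduct_sub, smul_dotProduct,
    dotProduct_smul, smul_eq_mul, h11, h22, h12, h21, hv1, hv2] at h
  nlinarith [h]

private lemma aux_diff_sq {m : Type*} [Fintype m] (u v : m → ℝ) :
    (u - v) ⬝ᵥ (u - v) ≤ 2 * (u ⬝ᵥ u) + 2 * (v ⬝ᵥ v) := by
  have h := aux_dp_nonneg (u + v)
  simp only [sub_dotProduct, dotProduct_sub, add_dotProduct,
    dotProduct_add] at h ⊢
  linarith

set_option maxHeartbeats 2000000 in
/-- Deterministic version of the supervised-learning conclusion of Theorem 1: in the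
three-class toy data model, under the high-probability conditions on the Gaussian
noise and on the empirical class means, the minimum-norm max-margin linear classifier
`(w₁, w₂, w₃)` has weight vectors almost orthogonal to `e₂`:
`|⟨e₂, wᵢ⟩| ≤ 16 d^{-1/20}` for each `i`. -/
theorem stmt_12 : ∃ d₀ : ℕ, ∀ d : ℕ, d₀ ≤ d →
    ∀ (ρ τ : ℝ), ρ = (d : ℝ) ^ (-(1 : ℝ) / 5) → τ = (d : ℝ) ^ ((1 : ℝ) / 5) →
    ∀ (e₁ e₂ : Fin d → ℝ), e₁ ⬝ᵥ e₁ = 1 → e₂ ⬝ᵥ e₂ = 1 → e₁ ⬝ᵥ e₂ = 0 →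
    ∀ (n₁ n₂ n₃ : ℕ), 1 ≤ n₁ → 1 ≤ n₂ → 1 ≤ n₃ → (n₃ : ℝ) ≤ (d : ℝ) ^ ((1 : ℝ) / 5) →
    ∀ (ξ : Fin n₁ ⊕ Fin n₂ ⊕ Fin n₃ → Fin d → ℝ)
      (q : Fin n₁ ⊕ Fin n₂ ⊕ Fin n₃ → ℝ)
      (x : Fin n₁ ⊕ Fin n₂ ⊕ Fin n₃ → Fin d → ℝ)
      (y : Fin n₁ ⊕ Fin n₂ ⊕ Fin n₃ → Fin 3),
    (∀ p, q p = 0 ∨ q p = 1) →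
    -- class-1 points
    (∀ i : Fin n₁, y (Sum.inl i) = 0 ∧
      x (Sum.inl i) = e₁ - (q (Sum.inl i) * τ) • e₂ + ρ • ξ (Sum.inl i)) →
    -- class-2 points
    (∀ i : Fin n₂, y (Sum.inr (Sum.inl i)) = 1 ∧
      x (Sum.inr (Sum.inl i)) =
        -e₁ - (q (Sum.inr (Sum.inl i)) * τ) • e₂ + ρ • ξ (Sum.inr (Sum.inl i))) →
    -- class-3 points
    (∀ i : Fin n₃, y (Sum.inr (Sum.inr i)) = 2 ∧
      x (Sum.inr (Sum.inr i)) = e₂ + ρ • ξ (Sum.inr (Sum.inr i))) →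
    -- (i) high-probability conditions on the noise vectors
    (∀ p, |ξ p ⬝ᵥ e₁| ≤ (d : ℝ) ^ ((1 : ℝ) / 10)) →
    (∀ p, |ξ p ⬝ᵥ e₂| ≤ (d : ℝ) ^ ((1 : ℝ) / 10)) →
    (∀ p, |ξ p ⬝ᵥ ξ p - (d : ℝ)| ≤ 4 * (d : ℝ) ^ ((3 : ℝ) / 4)) →
    (∀ p p', p ≠ p' → |ξ p ⬝ᵥ ξ p'| ≤ 3 * (d : ℝ) ^ ((3 : ℝ) / 5)) →
    -- (ii) conditions on the empirical class means over the q = 0 subsets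
    (Finset.univ.filter fun i : Fin n₁ => q (Sum.inl i) = 0).Nonempty →
    (Finset.univ.filter fun i : Fin n₂ => q (Sum.inr (Sum.inl i)) = 0).Nonempty →
    (let S₁ := Finset.univ.filter fun i : Fin n₁ => q (Sum.inl i) = 0
     let m₁ := ((S₁.card : ℝ)⁻¹ • ∑ i ∈ S₁, x (Sum.inl i)) - e₁
     Real.sqrt (m₁ ⬝ᵥ m₁) ≤ (d : ℝ) ^ (-(1 : ℝ) / 10)) →
    (let S₂ := Finset.univ.filter fun i : Fin n₂ => q (Sum.inr (Sum.inl i)) = 0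
     let m₂ := ((S₂.card : ℝ)⁻¹ • ∑ i ∈ S₂, x (Sum.inr (Sum.inl i))) + e₁
     Real.sqrt (m₂ ⬝ᵥ m₂) ≤ (d : ℝ) ^ (-(1 : ℝ) / 10)) →
    -- the min-norm max-margin classifier
    ∀ w : Fin 3 → Fin d → ℝ,
    (∀ p, ∀ j : Fin 3, j ≠ y p → w (y p) ⬝ᵥ x p ≥ w j ⬝ᵥ x p + 1) →
    (∀ w' : Fin 3 → Fin d → ℝ,
      (∀ p, ∀ j : Fin 3, j ≠ y p → w' (y p) ⬝ᵥ x p ≥ w' j ⬝ᵥ x p + 1) →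
      w 0 ⬝ᵥ w 0 + w 1 ⬝ᵥ w 1 + w 2 ⬝ᵥ w 2 ≤
        w' 0 ⬝ᵥ w' 0 + w' 1 ⬝ᵥ w' 1 + w' 2 ⬝ᵥ w' 2) →
    -- conclusion
    ∀ i : Fin 3, |e₂ ⬝ᵥ w i| ≤ 16 * (d : ℝ) ^ (-(1 : ℝ) / 20) := by
  refine ⟨10^40, ?_⟩
  intro d hd ρ τ hρ hτ e₁ e₂ he11 he22 he12 n₁ n₂ n₃ hn₁ hn₂ hn₃ hn₃d
    ξ q x y hq hx1 hx2 hx3 hξ1 hξ2 hξn hξc hS₁ne hS₂ne hm₁ hm₂ w hw hmin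
  -- ## numeric scaffolding
  have hd' : ((10:ℝ))^(40:ℕ) ≤ (d:ℝ) := by exact_mod_cast hd
  have hd0 : (0:ℝ) < (d:ℝ) := lt_of_lt_of_le (by norm_num) hd'
  have hd1 : (1:ℝ) ≤ (d:ℝ) := le_trans (by norm_num) hd'
  have hPpos : ∀ a : ℝ, 0 < (d:ℝ)^a := fun a => Real.rpow_pos_of_pos hd0 a
  have hPnn : ∀ a : ℝ, 0 ≤ (d:ℝ)^a := fun a => (hPpos a).le
  have hPmul : ∀ a b : ℝ, (d:ℝ)^a * (d:ℝ)^b = (d:ℝ)^(a+b) :=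
    fun a b => (Real.rpow_add hd0 a b).symm
  have hPmono : ∀ a b : ℝ, a ≤ b → (d:ℝ)^a ≤ (d:ℝ)^b :=
    fun a b h => Real.rpow_le_rpow_of_exponent_le hd1 h
  have hP0 : (d:ℝ)^(0:ℝ) = 1 := Real.rpow_zero _
  have hP1 : (d:ℝ)^(1:ℝ) = (d:ℝ) := Real.rpow_one _
  have hPle1 : ∀ a : ℝ, a ≤ 1 → (d:ℝ)^a ≤ (d:ℝ) :=
    fun a h => (hPmono a 1 h).trans (le_of_eq hP1)
  have hPmul1 : ∀ a : ℝ, (d:ℝ)^a * (d:ℝ) = (d:ℝ)^(a+1) := by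
    intro a
    have h := hPmul a 1
    rw [hP1] at h
    exact h
  have h100 : (100:ℝ) ≤ (d:ℝ)^((1:ℝ)/20) := by
    have h1 : ((10:ℝ)^(40:ℕ)) ^ ((1:ℝ)/20) ≤ (d:ℝ)^((1:ℝ)/20) :=
      Real.rpow_le_rpow (by positivity) hd' (by norm_num)
    have h2 : ((10:ℝ)^(40:ℕ)) ^ ((1:ℝ)/20) = 100 := by
      rw [← Real.rpow_natCast (10:ℝ) 40, ← Real.rpow_mul (by norm_num : (0:ℝ) ≤ 10)]
      rw [show ((40:ℕ):ℝ) * ((1:ℝ)/20) = ((2:ℕ):ℝ) by norm_num, Real.rpow_natCast]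
      norm_num
    linarith
  have h10000 : (10000:ℝ) ≤ (d:ℝ)^((1:ℝ)/10) := by
    have h := mul_le_mul h100 h100 (by norm_num) (hPnn _)
    rw [hPmul] at h
    have he : (1:ℝ)/20 + 1/20 = 1/10 := by norm_num
    rw [he] at h
    linarith
  have hm1' : Real.sqrt
      (((((Finset.univ.filter fun i : Fin n₁ => q (Sum.inl i) = 0).card : ℝ)⁻¹ •
          ∑ i ∈ Finset.univ.filter fun i : Fin n₁ => q (Sum.inl i) = 0, x (Sum.inl i)) - e₁) ⬝ᵥ
       ((((Finset.univ.filter fun i : Fin n₁ => q (Sum.inl i) = 0).card : ℝ)⁻¹ •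
          ∑ i ∈ Finset.univ.filter fun i : Fin n₁ => q (Sum.inl i) = 0, x (Sum.inl i)) - e₁))
      ≤ (d : ℝ) ^ (-(1 : ℝ) / 10) := hm₁
  have hm2' : Real.sqrt
      (((((Finset.univ.filter fun i : Fin n₂ => q (Sum.inr (Sum.inl i)) = 0).card : ℝ)⁻¹ •
          ∑ i ∈ Finset.univ.filter fun i : Fin n₂ => q (Sum.inr (Sum.inl i)) = 0,
            x (Sum.inr (Sum.inl i))) + e₁) ⬝ᵥ
       ((((Finset.univ.filter fun i : Fin n₂ => q (Sum.inr (Sum.inl i)) = 0).card : ℝ)⁻¹ •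
          ∑ i ∈ Finset.univ.filter fun i : Fin n₂ => q (Sum.inr (Sum.inl i)) = 0,
            x (Sum.inr (Sum.inl i))) + e₁))
      ≤ (d : ℝ) ^ (-(1 : ℝ) / 10) := hm₂
  clear hm₁ hm₂
  -- the small quantity s = d^{-1/10}
  set s : ℝ := (d:ℝ)^(-(1:ℝ)/10) with hsdef
  have hs0 : 0 < s := hPpos _
  have hssmall : s ≤ 1/10000 := by
    have hinv : s * (d:ℝ)^((1:ℝ)/10) = 1 := by
      rw [hsdef, hPmul]; norm_num [hP0]
    nlinarith [hinv, h10000, hs0]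
  have hss : s * s = (d:ℝ)^(-(1:ℝ)/5) := by
    rw [hsdef, hPmul]; norm_num
  -- ρ, τ facts
  have hρ0 : 0 < ρ := hρ ▸ hPpos _
  have hτ0 : 0 < τ := hτ ▸ hPpos _
  have hq01 : ∀ p, 0 ≤ q p ∧ q p ≤ 1 := by
    intro p; rcases hq p with h | h <;> simp [h]
  -- ## dot-product expansions of the data points
  have hdpx1 : ∀ (u : Fin d → ℝ) (i : Fin n₁),
      u ⬝ᵥ x (Sum.inl i) =
        u ⬝ᵥ e₁ - (q (Sum.inl i) * τ) * (u ⬝ᵥ e₂) + ρ * (u ⬝ᵥ ξ (Sum.inl i)) := by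
    intro u i
    rw [(hx1 i).2]
    simp only [dotProduct_add, dotProduct_sub, dotProduct_smul,
      smul_eq_mul]
  have hdpx2 : ∀ (u : Fin d → ℝ) (i : Fin n₂),
      u ⬝ᵥ x (Sum.inr (Sum.inl i)) =
        -(u ⬝ᵥ e₁) - (q (Sum.inr (Sum.inl i)) * τ) * (u ⬝ᵥ e₂)
          + ρ * (u ⬝ᵥ ξ (Sum.inr (Sum.inl i))) := by
    intro u i
    rw [(hx2 i).2]
    simp only [dotProduct_add, dotProduct_sub, dotProduct_smul,
      dotProduct_neg, smul_eq_mul]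
  have hdpx3 : ∀ (u : Fin d → ℝ) (i : Fin n₃),
      u ⬝ᵥ x (Sum.inr (Sum.inr i)) =
        u ⬝ᵥ e₂ + ρ * (u ⬝ᵥ ξ (Sum.inr (Sum.inr i))) := by
    intro u i
    rw [(hx3 i).2]
    simp only [dotProduct_add, dotProduct_smul, smul_eq_mul]
  -- e₁ against the data points
  have he1x1 : ∀ i : Fin n₁, |e₁ ⬝ᵥ x (Sum.inl i) - 1| ≤ s := by
    intro i
    rw [hdpx1 e₁ i, he11, he12, dotProduct_comm e₁ (ξ _)]
    have h1 := hξ1 (Sum.inl i)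
    have : (1:ℝ) - q (Sum.inl i) * τ * 0 + ρ * (ξ (Sum.inl i) ⬝ᵥ e₁) - 1
        = ρ * (ξ (Sum.inl i) ⬝ᵥ e₁) := by ring
    rw [this, abs_mul, abs_of_pos hρ0, hρ, hsdef]
    calc (d:ℝ)^(-(1:ℝ)/5) * |ξ (Sum.inl i) ⬝ᵥ e₁|
        ≤ (d:ℝ)^(-(1:ℝ)/5) * (d:ℝ)^((1:ℝ)/10) :=
          mul_le_mul_of_nonneg_left h1 (hPnn _)
      _ = (d:ℝ)^(-(1:ℝ)/10) := by rw [hPmul]; norm_num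
  have he1x2 : ∀ i : Fin n₂, |e₁ ⬝ᵥ x (Sum.inr (Sum.inl i)) + 1| ≤ s := by
    intro i
    rw [hdpx2 e₁ i, he11, he12, dotProduct_comm e₁ (ξ _)]
    have h1 := hξ1 (Sum.inr (Sum.inl i))
    have : -(1:ℝ) - q (Sum.inr (Sum.inl i)) * τ * 0 + ρ * (ξ (Sum.inr (Sum.inl i)) ⬝ᵥ e₁) + 1
        = ρ * (ξ (Sum.inr (Sum.inl i)) ⬝ᵥ e₁) := by ring
    rw [this, abs_mul, abs_of_pos hρ0, hρ, hsdef]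
    calc (d:ℝ)^(-(1:ℝ)/5) * |ξ (Sum.inr (Sum.inl i)) ⬝ᵥ e₁|
        ≤ (d:ℝ)^(-(1:ℝ)/5) * (d:ℝ)^((1:ℝ)/10) :=
          mul_le_mul_of_nonneg_left h1 (hPnn _)
      _ = (d:ℝ)^(-(1:ℝ)/10) := by rw [hPmul]; norm_num
  have he1x3 : ∀ i : Fin n₃, |e₁ ⬝ᵥ x (Sum.inr (Sum.inr i))| ≤ s := by
    intro i
    rw [hdpx3 e₁ i, he12, dotProduct_comm e₁ (ξ _)]
    have h1 := hξ1 (Sum.inr (Sum.inr i))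
    rw [zero_add, abs_mul, abs_of_pos hρ0, hρ, hsdef]
    calc (d:ℝ)^(-(1:ℝ)/5) * |ξ (Sum.inr (Sum.inr i)) ⬝ᵥ e₁|
        ≤ (d:ℝ)^(-(1:ℝ)/5) * (d:ℝ)^((1:ℝ)/10) :=
          mul_le_mul_of_nonneg_left h1 (hPnn _)
      _ = (d:ℝ)^(-(1:ℝ)/10) := by rw [hPmul]; norm_num

  -- ## the candidate classifier
  set δ : ℝ := 3 * s with hδdef
  set κ : ℝ := 2 * (d:ℝ)^(-(4:ℝ)/5) with hκdef
  have hδ0 : 0 ≤ δ := by rw [hδdef]; linarith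
  have hκ0 : 0 ≤ κ := by rw [hκdef]; nlinarith [hPnn (-(4:ℝ)/5)]
  set Ξ : Fin d → ℝ := ∑ j : Fin n₃, ξ (Sum.inr (Sum.inr j)) with hΞdef
  -- bound on each noise-vs-point term, class 1 and class 2
  have hterm1 : ∀ (j : Fin n₃) (i : Fin n₁),
      |ξ (Sum.inr (Sum.inr j)) ⬝ᵥ x (Sum.inl i)| ≤ 5 * (d:ℝ)^((2:ℝ)/5) := by
    intro j i
    have hexp : ξ (Sum.inr (Sum.inr j)) ⬝ᵥ x (Sum.inl i) =
        ξ (Sum.inr (Sum.inr j)) ⬝ᵥ e₁ +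
        -((q (Sum.inl i) * τ) * (ξ (Sum.inr (Sum.inr j)) ⬝ᵥ e₂)) +
        ρ * (ξ (Sum.inr (Sum.inr j)) ⬝ᵥ ξ (Sum.inl i)) := by
      rw [hdpx1]; ring
    rw [hexp]
    refine (abs_add_three _ _ _).trans ?_
    rw [abs_neg]
    have hA' : |ξ (Sum.inr (Sum.inr j)) ⬝ᵥ e₁| ≤ (d:ℝ)^((1:ℝ)/10) := hξ1 _
    have hB' : |ξ (Sum.inr (Sum.inr j)) ⬝ᵥ e₂| ≤ (d:ℝ)^((1:ℝ)/10) := hξ2 _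
    have hC' : |ξ (Sum.inr (Sum.inr j)) ⬝ᵥ ξ (Sum.inl i)| ≤ 3*(d:ℝ)^((3:ℝ)/5) :=
      hξc _ _ (by simp)
    have hqτ : |q (Sum.inl i) * τ| ≤ (d:ℝ)^((1:ℝ)/5) := by
      rw [abs_mul, abs_of_nonneg (hq01 _).1, abs_of_pos hτ0, ← hτ]
      nlinarith [(hq01 (Sum.inl i)).2, hτ0]
    have t2 : |q (Sum.inl i) * τ * (ξ (Sum.inr (Sum.inr j)) ⬝ᵥ e₂)| ≤
        (d:ℝ)^((1:ℝ)/5) * (d:ℝ)^((1:ℝ)/10) := by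
      rw [abs_mul]
      exact mul_le_mul hqτ hB' (abs_nonneg _) (hPnn _)
    have t3 : |ρ * (ξ (Sum.inr (Sum.inr j)) ⬝ᵥ ξ (Sum.inl i))| ≤
        (d:ℝ)^(-(1:ℝ)/5) * (3*(d:ℝ)^((3:ℝ)/5)) := by
      rw [abs_mul]
      refine mul_le_mul ?_ hC' (abs_nonneg _) (hPnn _)
      rw [abs_of_pos hρ0, hρ]
    have q1 : (d:ℝ)^((1:ℝ)/5) * (d:ℝ)^((1:ℝ)/10) = (d:ℝ)^((3:ℝ)/10) := by
      rw [hPmul]; norm_num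
    have q2 : (d:ℝ)^(-(1:ℝ)/5) * (3*(d:ℝ)^((3:ℝ)/5)) = 3*(d:ℝ)^((2:ℝ)/5) := by
      rw [show (d:ℝ)^(-(1:ℝ)/5) * (3*(d:ℝ)^((3:ℝ)/5)) =
        3*((d:ℝ)^(-(1:ℝ)/5) * (d:ℝ)^((3:ℝ)/5)) by ring, hPmul]
      norm_num
    have m0 : (d:ℝ)^((1:ℝ)/10) ≤ (d:ℝ)^((2:ℝ)/5) := hPmono _ _ (by norm_num)
    have m1 : (d:ℝ)^((3:ℝ)/10) ≤ (d:ℝ)^((2:ℝ)/5) := hPmono _ _ (by norm_num)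
    linarith
  have hterm2 : ∀ (j : Fin n₃) (i : Fin n₂),
      |ξ (Sum.inr (Sum.inr j)) ⬝ᵥ x (Sum.inr (Sum.inl i))| ≤ 5 * (d:ℝ)^((2:ℝ)/5) := by
    intro j i
    have hexp : ξ (Sum.inr (Sum.inr j)) ⬝ᵥ x (Sum.inr (Sum.inl i)) =
        -(ξ (Sum.inr (Sum.inr j)) ⬝ᵥ e₁) +
        -((q (Sum.inr (Sum.inl i)) * τ) * (ξ (Sum.inr (Sum.inr j)) ⬝ᵥ e₂)) +
        ρ * (ξ (Sum.inr (Sum.inr j)) ⬝ᵥ ξ (Sum.inr (Sum.inl i))) := by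
      rw [hdpx2]; ring
    rw [hexp]
    refine (abs_add_three _ _ _).trans ?_
    rw [abs_neg, abs_neg]
    have hA' : |ξ (Sum.inr (Sum.inr j)) ⬝ᵥ e₁| ≤ (d:ℝ)^((1:ℝ)/10) := hξ1 _
    have hB' : |ξ (Sum.inr (Sum.inr j)) ⬝ᵥ e₂| ≤ (d:ℝ)^((1:ℝ)/10) := hξ2 _
    have hC' : |ξ (Sum.inr (Sum.inr j)) ⬝ᵥ ξ (Sum.inr (Sum.inl i))| ≤ 3*(d:ℝ)^((3:ℝ)/5) :=
      hξc _ _ (by simp)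
    have hqτ : |q (Sum.inr (Sum.inl i)) * τ| ≤ (d:ℝ)^((1:ℝ)/5) := by
      rw [abs_mul, abs_of_nonneg (hq01 _).1, abs_of_pos hτ0, ← hτ]
      nlinarith [(hq01 (Sum.inr (Sum.inl i))).2, hτ0]
    have t2 : |q (Sum.inr (Sum.inl i)) * τ * (ξ (Sum.inr (Sum.inr j)) ⬝ᵥ e₂)| ≤
        (d:ℝ)^((1:ℝ)/5) * (d:ℝ)^((1:ℝ)/10) := by
      rw [abs_mul]
      exact mul_le_mul hqτ hB' (abs_nonneg _) (hPnn _)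
    have t3 : |ρ * (ξ (Sum.inr (Sum.inr j)) ⬝ᵥ ξ (Sum.inr (Sum.inl i)))| ≤
        (d:ℝ)^(-(1:ℝ)/5) * (3*(d:ℝ)^((3:ℝ)/5)) := by
      rw [abs_mul]
      refine mul_le_mul ?_ hC' (abs_nonneg _) (hPnn _)
      rw [abs_of_pos hρ0, hρ]
    have q1 : (d:ℝ)^((1:ℝ)/5) * (d:ℝ)^((1:ℝ)/10) = (d:ℝ)^((3:ℝ)/10) := by
      rw [hPmul]; norm_num
    have q2 : (d:ℝ)^(-(1:ℝ)/5) * (3*(d:ℝ)^((3:ℝ)/5)) = 3*(d:ℝ)^((2:ℝ)/5) := by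
      rw [show (d:ℝ)^(-(1:ℝ)/5) * (3*(d:ℝ)^((3:ℝ)/5)) =
        3*((d:ℝ)^(-(1:ℝ)/5) * (d:ℝ)^((3:ℝ)/5)) by ring, hPmul]
      norm_num
    have m0 : (d:ℝ)^((1:ℝ)/10) ≤ (d:ℝ)^((2:ℝ)/5) := hPmono _ _ (by norm_num)
    have m1 : (d:ℝ)^((3:ℝ)/10) ≤ (d:ℝ)^((2:ℝ)/5) := hPmono _ _ (by norm_num)
    linarith
  -- aggregate noise vector against class-1/2 points
  have hΞx1 : ∀ i : Fin n₁, |Ξ ⬝ᵥ x (Sum.inl i)| ≤ 5 * (d:ℝ)^((3:ℝ)/5) := by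
    intro i
    rw [hΞdef, aux_sum_dp]
    refine (Finset.abs_sum_le_sum_abs _ _).trans ?_
    have hb := Finset.sum_le_card_nsmul Finset.univ _ (5*(d:ℝ)^((2:ℝ)/5))
      (fun j _ => hterm1 j i)
    rw [Finset.card_univ, Fintype.card_fin, nsmul_eq_mul] at hb
    refine hb.trans ?_
    have h5 : (0:ℝ) ≤ 5*(d:ℝ)^((2:ℝ)/5) := by nlinarith [hPnn ((2:ℝ)/5)]
    refine (mul_le_mul_of_nonneg_right hn₃d h5).trans ?_
    rw [show (d:ℝ)^((1:ℝ)/5) * (5*(d:ℝ)^((2:ℝ)/5)) =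
      5*((d:ℝ)^((1:ℝ)/5)*(d:ℝ)^((2:ℝ)/5)) by ring, hPmul]
    norm_num
  have hΞx2 : ∀ i : Fin n₂, |Ξ ⬝ᵥ x (Sum.inr (Sum.inl i))| ≤ 5 * (d:ℝ)^((3:ℝ)/5) := by
    intro i
    rw [hΞdef, aux_sum_dp]
    refine (Finset.abs_sum_le_sum_abs _ _).trans ?_
    have hb := Finset.sum_le_card_nsmul Finset.univ _ (5*(d:ℝ)^((2:ℝ)/5))
      (fun j _ => hterm2 j i)
    rw [Finset.card_univ, Fintype.card_fin, nsmul_eq_mul] at hb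
    refine hb.trans ?_
    have h5 : (0:ℝ) ≤ 5*(d:ℝ)^((2:ℝ)/5) := by nlinarith [hPnn ((2:ℝ)/5)]
    refine (mul_le_mul_of_nonneg_right hn₃d h5).trans ?_
    rw [show (d:ℝ)^((1:ℝ)/5) * (5*(d:ℝ)^((2:ℝ)/5)) =
      5*((d:ℝ)^((1:ℝ)/5)*(d:ℝ)^((2:ℝ)/5)) by ring, hPmul]
    norm_num
  -- aggregate noise vector against class-3 points: lower bound
  have hΞx3 : ∀ i : Fin n₃,
      (d:ℝ)^((4:ℝ)/5) - 9*(d:ℝ)^((3:ℝ)/5) ≤ Ξ ⬝ᵥ x (Sum.inr (Sum.inr i)) := by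
    intro i
    rw [hΞdef, aux_sum_dp, ← Finset.add_sum_erase _ _ (Finset.mem_univ i)]
    have hρd : ρ * (d:ℝ) = (d:ℝ)^((4:ℝ)/5) := by
      have h := hPmul (-(1:ℝ)/5) 1
      rw [hP1] at h
      rw [hρ, h]; norm_num
    have hdiag : (d:ℝ)^((4:ℝ)/5) - (d:ℝ)^((1:ℝ)/10) - 4*(d:ℝ)^((11:ℝ)/20)
        ≤ ξ (Sum.inr (Sum.inr i)) ⬝ᵥ x (Sum.inr (Sum.inr i)) := by
      rw [hdpx3]
      have hB := abs_le.1 (hξ2 (Sum.inr (Sum.inr i)))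
      have hN := abs_le.1 (hξn (Sum.inr (Sum.inr i)))
      have h3 : ρ * ((d:ℝ) - 4*(d:ℝ)^((3:ℝ)/4)) ≤
          ρ * (ξ (Sum.inr (Sum.inr i)) ⬝ᵥ ξ (Sum.inr (Sum.inr i))) :=
        mul_le_mul_of_nonneg_left (by linarith [hN.1]) hρ0.le
      have h4 : ρ * ((d:ℝ) - 4*(d:ℝ)^((3:ℝ)/4)) =
          (d:ℝ)^((4:ℝ)/5) - 4*(d:ℝ)^((11:ℝ)/20) := by
        rw [mul_sub, hρd, show ρ*(4*(d:ℝ)^((3:ℝ)/4)) = 4*(ρ*(d:ℝ)^((3:ℝ)/4)) by ring,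
          hρ, hPmul]
        norm_num
      linarith [hB.1]
    have hoff : ∀ j ∈ Finset.univ.erase i,
        -(4*(d:ℝ)^((2:ℝ)/5)) ≤ ξ (Sum.inr (Sum.inr j)) ⬝ᵥ x (Sum.inr (Sum.inr i)) := by
      intro j hj
      have hjne : j ≠ i := Finset.ne_of_mem_erase hj
      rw [hdpx3]
      have hB := abs_le.1 (hξ2 (Sum.inr (Sum.inr j)))
      have hC := abs_le.1 (hξc (Sum.inr (Sum.inr j)) (Sum.inr (Sum.inr i)) (by simp [hjne]))
      have h3 : ρ * (-(3*(d:ℝ)^((3:ℝ)/5))) ≤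
          ρ * (ξ (Sum.inr (Sum.inr j)) ⬝ᵥ ξ (Sum.inr (Sum.inr i))) :=
        mul_le_mul_of_nonneg_left hC.1 hρ0.le
      have h4 : ρ * (-(3*(d:ℝ)^((3:ℝ)/5))) = -(3*(d:ℝ)^((2:ℝ)/5)) := by
        rw [show ρ*(-(3*(d:ℝ)^((3:ℝ)/5))) = -(3*(ρ*(d:ℝ)^((3:ℝ)/5))) by ring, hρ, hPmul]
        norm_num
      have m : (d:ℝ)^((1:ℝ)/10) ≤ (d:ℝ)^((2:ℝ)/5) := hPmono _ _ (by norm_num)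
      linarith [hB.1]
    have hsum := Finset.card_nsmul_le_sum (Finset.univ.erase i) _ _ hoff
    rw [nsmul_eq_mul] at hsum
    have hcard : (((Finset.univ.erase i) : Finset (Fin n₃)).card : ℝ) ≤ (n₃:ℝ) := by
      have h := Finset.card_le_card (Finset.erase_subset i (Finset.univ : Finset (Fin n₃)))
      rw [Finset.card_univ, Fintype.card_fin] at h
      exact_mod_cast h
    have h5 : -((n₃:ℝ) * (4*(d:ℝ)^((2:ℝ)/5))) ≤
        ∑ j ∈ Finset.univ.erase i, ξ (Sum.inr (Sum.inr j)) ⬝ᵥ x (Sum.inr (Sum.inr i)) := by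
      nlinarith [hsum, hcard, hPnn ((2:ℝ)/5)]
    have h6 : (n₃:ℝ) * (4*(d:ℝ)^((2:ℝ)/5)) ≤ 4*(d:ℝ)^((3:ℝ)/5) := by
      have h7 : (0:ℝ) ≤ 4*(d:ℝ)^((2:ℝ)/5) := by nlinarith [hPnn ((2:ℝ)/5)]
      refine (mul_le_mul_of_nonneg_right hn₃d h7).trans ?_
      rw [show (d:ℝ)^((1:ℝ)/5)*(4*(d:ℝ)^((2:ℝ)/5)) =
        4*((d:ℝ)^((1:ℝ)/5)*(d:ℝ)^((2:ℝ)/5)) by ring, hPmul]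
      norm_num
    have m1 : (d:ℝ)^((1:ℝ)/10) ≤ (d:ℝ)^((3:ℝ)/5) := hPmono _ _ (by norm_num)
    have m2 : (d:ℝ)^((11:ℝ)/20) ≤ (d:ℝ)^((3:ℝ)/5) := hPmono _ _ (by norm_num)
    linarith [hdiag]
  -- squared norm of the aggregate noise vector
  have hΞΞ : Ξ ⬝ᵥ Ξ ≤ 8 * (d:ℝ)^((6:ℝ)/5) := by
    rw [hΞdef, aux_sum_dp]
    have heach : ∀ j ∈ (Finset.univ : Finset (Fin n₃)),
        ξ (Sum.inr (Sum.inr j)) ⬝ᵥ (∑ k : Fin n₃, ξ (Sum.inr (Sum.inr k))) ≤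
          8 * (d:ℝ) := by
      intro j _
      rw [aux_dp_sum, ← Finset.add_sum_erase _ _ (Finset.mem_univ j)]
      have hN := abs_le.1 (hξn (Sum.inr (Sum.inr j)))
      have hoff : ∀ k ∈ Finset.univ.erase j,
          ξ (Sum.inr (Sum.inr j)) ⬝ᵥ ξ (Sum.inr (Sum.inr k)) ≤ 3*(d:ℝ)^((3:ℝ)/5) := by
        intro k hk
        have hkne : k ≠ j := Finset.ne_of_mem_erase hk
        exact (abs_le.1 (hξc (Sum.inr (Sum.inr j)) (Sum.inr (Sum.inr k))
          (by simp [Ne.symm hkne]))).2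
      have hsum := Finset.sum_le_card_nsmul (Finset.univ.erase j) _ _ hoff
      rw [nsmul_eq_mul] at hsum
      have hcard : (((Finset.univ.erase j) : Finset (Fin n₃)).card : ℝ) ≤ (n₃:ℝ) := by
        have h := Finset.card_le_card (Finset.erase_subset j (Finset.univ : Finset (Fin n₃)))
        rw [Finset.card_univ, Fintype.card_fin] at h
        exact_mod_cast h
      have h5 : ∑ k ∈ Finset.univ.erase j,
          ξ (Sum.inr (Sum.inr j)) ⬝ᵥ ξ (Sum.inr (Sum.inr k)) ≤ (n₃:ℝ)*(3*(d:ℝ)^((3:ℝ)/5)) := by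
        nlinarith [hsum, hcard, hPnn ((3:ℝ)/5)]
      have h6 : (n₃:ℝ)*(3*(d:ℝ)^((3:ℝ)/5)) ≤ 3*(d:ℝ)^((4:ℝ)/5) := by
        have h7 : (0:ℝ) ≤ 3*(d:ℝ)^((3:ℝ)/5) := by positivity
        refine (mul_le_mul_of_nonneg_right hn₃d h7).trans ?_
        rw [show (d:ℝ)^((1:ℝ)/5)*(3*(d:ℝ)^((3:ℝ)/5)) =
          3*((d:ℝ)^((1:ℝ)/5)*(d:ℝ)^((3:ℝ)/5)) by ring, hPmul]
        norm_num
      have m1 : (d:ℝ)^((3:ℝ)/4) ≤ (d:ℝ) := hPle1 _ (by norm_num)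
      have m2 : (d:ℝ)^((4:ℝ)/5) ≤ (d:ℝ) := hPle1 _ (by norm_num)
      refine le_trans (add_le_add (show ξ (Sum.inr (Sum.inr j)) ⬝ᵥ ξ (Sum.inr (Sum.inr j)) ≤
        (d:ℝ) + 4*(d:ℝ)^((3:ℝ)/4) by linarith only [hN.2]) h5) ?_
      linarith only [h6, m1, m2]
    have hb := Finset.sum_le_card_nsmul Finset.univ _ (8*(d:ℝ)) heach
    rw [Finset.card_univ, Fintype.card_fin, nsmul_eq_mul] at hb
    refine hb.trans ?_
    have h7 : (0:ℝ) ≤ 8*(d:ℝ) := by positivity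
    refine (mul_le_mul_of_nonneg_right hn₃d h7).trans ?_
    rw [show (d:ℝ)^((1:ℝ)/5)*(8*(d:ℝ)) = 8*((d:ℝ)^((1:ℝ)/5)*(d:ℝ)) by ring, hPmul1]
    norm_num
  -- the candidate weights
  set W : Fin 3 → Fin d → ℝ :=
    fun k => if k = 0 then (1+3*s) • e₁ else if k = 1 then (-(1+3*s)) • e₁ else κ • Ξ
    with hWdef
  have hW0 : W 0 = (1+3*s) • e₁ := by simp [hWdef]
  have hW1 : W 1 = (-(1+3*s)) • e₁ := by simp [hWdef]
  have hW2 : W 2 = κ • Ξ := by simp [hWdef]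
  have hfin3 : ∀ j : Fin 3, j = 0 ∨ j = 1 ∨ j = 2 := by decide
  -- κ times the aggregate dot products
  have hKx1 : ∀ i : Fin n₁, κ * (Ξ ⬝ᵥ x (Sum.inl i)) ≤ 10*(s*s) := by
    intro i
    have h1 : κ * (Ξ ⬝ᵥ x (Sum.inl i)) ≤ κ * (5*(d:ℝ)^((3:ℝ)/5)) :=
      mul_le_mul_of_nonneg_left (abs_le.1 (hΞx1 i)).2 hκ0
    refine h1.trans ?_
    rw [hκdef, show 2*(d:ℝ)^(-(4:ℝ)/5)*(5*(d:ℝ)^((3:ℝ)/5)) =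
      10*((d:ℝ)^(-(4:ℝ)/5)*(d:ℝ)^((3:ℝ)/5)) by ring, hPmul,
      show (-(4:ℝ)/5 + (3:ℝ)/5) = -(1:ℝ)/5 by norm_num, ← hss]
  have hKx2 : ∀ i : Fin n₂, κ * (Ξ ⬝ᵥ x (Sum.inr (Sum.inl i))) ≤ 10*(s*s) := by
    intro i
    have h1 : κ * (Ξ ⬝ᵥ x (Sum.inr (Sum.inl i))) ≤ κ * (5*(d:ℝ)^((3:ℝ)/5)) :=
      mul_le_mul_of_nonneg_left (abs_le.1 (hΞx2 i)).2 hκ0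
    refine h1.trans ?_
    rw [hκdef, show 2*(d:ℝ)^(-(4:ℝ)/5)*(5*(d:ℝ)^((3:ℝ)/5)) =
      10*((d:ℝ)^(-(4:ℝ)/5)*(d:ℝ)^((3:ℝ)/5)) by ring, hPmul,
      show (-(4:ℝ)/5 + (3:ℝ)/5) = -(1:ℝ)/5 by norm_num, ← hss]
  have hKx3 : ∀ i : Fin n₃, 2 - 18*(s*s) ≤ κ * (Ξ ⬝ᵥ x (Sum.inr (Sum.inr i))) := by
    intro i
    have h1 : κ * ((d:ℝ)^((4:ℝ)/5) - 9*(d:ℝ)^((3:ℝ)/5)) ≤ κ * (Ξ ⬝ᵥ x (Sum.inr (Sum.inr i))) :=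
      mul_le_mul_of_nonneg_left (hΞx3 i) hκ0
    refine le_trans ?_ h1
    rw [hκdef, mul_sub]
    have e1 : 2*(d:ℝ)^(-(4:ℝ)/5) * (d:ℝ)^((4:ℝ)/5) = 2 := by
      rw [mul_assoc, hPmul, show (-(4:ℝ)/5 + (4:ℝ)/5) = (0:ℝ) by norm_num, hP0, mul_one]
    have e2 : 2*(d:ℝ)^(-(4:ℝ)/5) * (9*(d:ℝ)^((3:ℝ)/5)) = 18*(s*s) := by
      rw [show 2*(d:ℝ)^(-(4:ℝ)/5) * (9*(d:ℝ)^((3:ℝ)/5)) =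
        18*((d:ℝ)^(-(4:ℝ)/5)*(d:ℝ)^((3:ℝ)/5)) by ring, hPmul,
        show (-(4:ℝ)/5 + (3:ℝ)/5) = -(1:ℝ)/5 by norm_num, ← hss]
    linarith only [e1, e2]
  have q2 : s*s ≤ s*(1/10000) := mul_le_mul_of_nonneg_left hssmall hs0.le
  -- feasibility of the candidate
  have hWfeas : ∀ p, ∀ j : Fin 3, j ≠ y p → W (y p) ⬝ᵥ x p ≥ W j ⬝ᵥ x p + 1 := by
    intro p j hj
    rcases p with i | i | i
    · rw [(hx1 i).1] at hj ⊢
      have hE := abs_le.1 (he1x1 i)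
      have pE : (0:ℝ) ≤ (1+3*s)*(e₁ ⬝ᵥ x (Sum.inl i) - (1-s)) :=
        mul_nonneg (by linarith only [hs0]) (by linarith only [hE.1])
      rcases hfin3 j with rfl | rfl | rfl
      · exact absurd rfl hj
      · rw [hW0, hW1, smul_dotProduct, smul_dotProduct, smul_eq_mul, smul_eq_mul]
        nlinarith [pE, q2, hs0]
      · rw [hW0, hW2, smul_dotProduct, smul_dotProduct, smul_eq_mul, smul_eq_mul]
        nlinarith [pE, q2, hs0, hKx1 i]
    · rw [(hx2 i).1] at hj ⊢
      have hE := abs_le.1 (he1x2 i)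
      have pE : (0:ℝ) ≤ (1+3*s)*(-(1-s) - e₁ ⬝ᵥ x (Sum.inr (Sum.inl i))) :=
        mul_nonneg (by linarith only [hs0]) (by linarith only [hE.2])
      rcases hfin3 j with rfl | rfl | rfl
      · rw [hW1, hW0, smul_dotProduct, smul_dotProduct, smul_eq_mul, smul_eq_mul]
        nlinarith [pE, q2, hs0]
      · exact absurd rfl hj
      · rw [hW1, hW2, smul_dotProduct, smul_dotProduct, smul_eq_mul, smul_eq_mul]
        nlinarith [pE, q2, hs0, hKx2 i]
    · rw [(hx3 i).1] at hj ⊢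
      have hE := abs_le.1 (he1x3 i)
      rcases hfin3 j with rfl | rfl | rfl
      · rw [hW2, hW0, smul_dotProduct, smul_dotProduct, smul_eq_mul, smul_eq_mul]
        have p3 : (0:ℝ) ≤ (1+3*s)*(s - e₁ ⬝ᵥ x (Sum.inr (Sum.inr i))) :=
          mul_nonneg (by linarith only [hs0]) (by linarith only [hE.2])
        nlinarith [p3, q2, hs0, hssmall, hKx3 i]
      · rw [hW2, hW1, smul_dotProduct, smul_dotProduct, smul_eq_mul, smul_eq_mul]
        have p3 : (0:ℝ) ≤ (1+3*s)*(s + e₁ ⬝ᵥ x (Sum.inr (Sum.inr i))) :=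
          mul_nonneg (by linarith only [hs0]) (by linarith only [hE.1])
        nlinarith [p3, q2, hs0, hssmall, hKx3 i]
      · exact absurd rfl hj
  -- norm of the candidate
  have hWnorm : W 0 ⬝ᵥ W 0 + W 1 ⬝ᵥ W 1 + W 2 ⬝ᵥ W 2 ≤ 2 + 13*s := by
    rw [hW0, hW1, hW2]
    rw [smul_dotProduct, smul_dotProduct, smul_dotProduct,
      dotProduct_smul, dotProduct_smul, dotProduct_smul]
    simp only [smul_eq_mul, he11]
    have hκΞ : κ*(κ*(Ξ ⬝ᵥ Ξ)) ≤ 32*((s*s)*(s*s)) := by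
      have h1 : κ*(Ξ ⬝ᵥ Ξ) ≤ κ*(8*(d:ℝ)^((6:ℝ)/5)) := mul_le_mul_of_nonneg_left hΞΞ hκ0
      have h2 : κ*(κ*(Ξ ⬝ᵥ Ξ)) ≤ κ*(κ*(8*(d:ℝ)^((6:ℝ)/5))) := mul_le_mul_of_nonneg_left h1 hκ0
      refine h2.trans ?_
      have e4 : ((s*s)*(s*s)) = (d:ℝ)^(-(2:ℝ)/5) := by
        rw [hss, hPmul, show (-(1:ℝ)/5 + -(1:ℝ)/5) = -(2:ℝ)/5 by norm_num]
      rw [hκdef, show 2*(d:ℝ)^(-(4:ℝ)/5)*(2*(d:ℝ)^(-(4:ℝ)/5)*(8*(d:ℝ)^((6:ℝ)/5))) =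
        32*((d:ℝ)^(-(4:ℝ)/5)*((d:ℝ)^(-(4:ℝ)/5)*(d:ℝ)^((6:ℝ)/5))) by ring, hPmul, hPmul,
        show (-(4:ℝ)/5 + (-(4:ℝ)/5 + (6:ℝ)/5)) = -(2:ℝ)/5 by norm_num, ← e4]
    have hs2one : s*s ≤ 1 := by linarith only [q2, hssmall, hs0]
    have q4 : (s*s)*(s*s) ≤ (s*s)*1 :=
      mul_le_mul_of_nonneg_left hs2one (mul_nonneg hs0.le hs0.le)
    nlinarith [hκΞ, q2, q4, hs0]
  -- minimality gives the norm bound on w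
  have hT : w 0 ⬝ᵥ w 0 + w 1 ⬝ᵥ w 1 + w 2 ⬝ᵥ w 2 ≤ 2 + 13*s := (hmin W hWfeas).trans hWnorm
  have hTk : ∀ k : Fin 3, w k ⬝ᵥ w k ≤ 2^2 := by
    intro k
    have h0 := aux_dp_nonneg (w 0)
    have h1 := aux_dp_nonneg (w 1)
    have h2 := aux_dp_nonneg (w 2)
    rcases hfin3 k with rfl | rfl | rfl <;> linarith only [hT, h0, h1, h2, hssmall, hs0]
  have hdiff : ∀ k l : Fin 3, (w k - w l) ⬝ᵥ (w k - w l) ≤ 4^2 := by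
    intro k l
    have h := aux_diff_sq (w k) (w l)
    linarith only [h, hTk k, hTk l]
  -- class-1 mean estimates
  set S₁ : Finset (Fin n₁) := Finset.univ.filter (fun i : Fin n₁ => q (Sum.inl i) = 0)
    with hS₁def
  set μ₁ : Fin d → ℝ := ((S₁.card : ℝ)⁻¹ • ∑ i ∈ S₁, x (Sum.inl i)) with hμ₁def
  have hmm1 : (μ₁ - e₁) ⬝ᵥ (μ₁ - e₁) ≤ s^2 := by
    have h0 := aux_dp_nonneg (μ₁ - e₁)
    have h1 := pow_le_pow_left₀ (Real.sqrt_nonneg _) hm1' 2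
    rw [Real.sq_sqrt h0] at h1
    exact h1
  have hμ1w : ∀ j : Fin 3, j ≠ 0 → 1 ≤ (w 0 - w j) ⬝ᵥ μ₁ := by
    intro j hj
    have hcard : 0 < S₁.card := Finset.card_pos.mpr hS₁ne
    have hc0 : (0:ℝ) < (S₁.card:ℝ) := by exact_mod_cast hcard
    have hpt : ∀ i ∈ S₁, (1:ℝ) ≤ (w 0 - w j) ⬝ᵥ x (Sum.inl i) := by
      intro i _
      have hc := hw (Sum.inl i) j (by rw [(hx1 i).1]; exact hj)
      rw [(hx1 i).1] at hc
      rw [sub_dotProduct]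
      linarith only [hc]
    have hsum := Finset.card_nsmul_le_sum S₁ _ _ hpt
    rw [nsmul_eq_mul, mul_one] at hsum
    rw [hμ₁def, dotProduct_smul, smul_eq_mul, aux_dp_sum]
    have hinv : (S₁.card:ℝ)⁻¹ * (S₁.card:ℝ) = 1 := inv_mul_cancel₀ (ne_of_gt hc0)
    have hmul : (S₁.card:ℝ)⁻¹ * (S₁.card:ℝ) ≤
        (S₁.card:ℝ)⁻¹ * (∑ i ∈ S₁, (w 0 - w j) ⬝ᵥ x (Sum.inl i)) :=
      mul_le_mul_of_nonneg_left hsum (inv_nonneg.mpr hc0.le)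
    linarith only [hinv, hmul]
  have hAj : ∀ j : Fin 3, j ≠ 0 → 1 - 4*s ≤ e₁ ⬝ᵥ w 0 - e₁ ⬝ᵥ w j := by
    intro j hj
    have h1 := hμ1w j hj
    have hsplit : (w 0 - w j) ⬝ᵥ μ₁ = (w 0 - w j) ⬝ᵥ e₁ + (w 0 - w j) ⬝ᵥ (μ₁ - e₁) := by
      rw [← dotProduct_add]
      congr 1
      abel
    have habs := abs_le.1 (aux_dp_abs_le (w 0 - w j) (μ₁ - e₁)
      (by norm_num : (0:ℝ) ≤ 4) hs0.le (hdiff 0 j) hmm1)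
    have hcm : (w 0 - w j) ⬝ᵥ e₁ = e₁ ⬝ᵥ w 0 - e₁ ⬝ᵥ w j := by
      rw [sub_dotProduct, dotProduct_comm (w 0) e₁, dotProduct_comm (w j) e₁]
    rw [hsplit, hcm] at h1
    linarith only [h1, habs.2]
  -- class-2 mean estimates
  set S₂ : Finset (Fin n₂) := Finset.univ.filter (fun i : Fin n₂ => q (Sum.inr (Sum.inl i)) = 0)
    with hS₂def
  set μ₂ : Fin d → ℝ := ((S₂.card : ℝ)⁻¹ • ∑ i ∈ S₂, x (Sum.inr (Sum.inl i))) with hμ₂def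
  have hmm2 : (μ₂ + e₁) ⬝ᵥ (μ₂ + e₁) ≤ s^2 := by
    have h0 := aux_dp_nonneg (μ₂ + e₁)
    have h1 := pow_le_pow_left₀ (Real.sqrt_nonneg _) hm2' 2
    rw [Real.sq_sqrt h0] at h1
    exact h1
  have hμ2w : ∀ j : Fin 3, j ≠ 1 → 1 ≤ (w 1 - w j) ⬝ᵥ μ₂ := by
    intro j hj
    have hcard : 0 < S₂.card := Finset.card_pos.mpr hS₂ne
    have hc0 : (0:ℝ) < (S₂.card:ℝ) := by exact_mod_cast hcard
    have hpt : ∀ i ∈ S₂, (1:ℝ) ≤ (w 1 - w j) ⬝ᵥ x (Sum.inr (Sum.inl i)) := by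
      intro i _
      have hc := hw (Sum.inr (Sum.inl i)) j (by rw [(hx2 i).1]; exact hj)
      rw [(hx2 i).1] at hc
      rw [sub_dotProduct]
      linarith only [hc]
    have hsum := Finset.card_nsmul_le_sum S₂ _ _ hpt
    rw [nsmul_eq_mul, mul_one] at hsum
    rw [hμ₂def, dotProduct_smul, smul_eq_mul, aux_dp_sum]
    have hinv : (S₂.card:ℝ)⁻¹ * (S₂.card:ℝ) = 1 := inv_mul_cancel₀ (ne_of_gt hc0)
    have hmul : (S₂.card:ℝ)⁻¹ * (S₂.card:ℝ) ≤
        (S₂.card:ℝ)⁻¹ * (∑ i ∈ S₂, (w 1 - w j) ⬝ᵥ x (Sum.inr (Sum.inl i))) :=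
      mul_le_mul_of_nonneg_left hsum (inv_nonneg.mpr hc0.le)
    linarith only [hinv, hmul]
  have hBj : ∀ j : Fin 3, j ≠ 1 → 1 - 4*s ≤ e₁ ⬝ᵥ w j - e₁ ⬝ᵥ w 1 := by
    intro j hj
    have h1 := hμ2w j hj
    have hsplit : (w 1 - w j) ⬝ᵥ μ₂ = (w 1 - w j) ⬝ᵥ (-e₁) + (w 1 - w j) ⬝ᵥ (μ₂ + e₁) := by
      rw [← dotProduct_add]
      congr 1
      abel
    have habs := abs_le.1 (aux_dp_abs_le (w 1 - w j) (μ₂ + e₁)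
      (by norm_num : (0:ℝ) ≤ 4) hs0.le (hdiff 1 j) hmm2)
    have hcm : (w 1 - w j) ⬝ᵥ (-e₁) = e₁ ⬝ᵥ w j - e₁ ⬝ᵥ w 1 := by
      rw [dotProduct_neg, sub_dotProduct,
        dotProduct_comm (w 1) e₁, dotProduct_comm (w j) e₁]
      ring
    rw [hsplit, hcm] at h1
    linarith only [h1, habs.2]
  -- Bessel and conclusion
  have hbes : ∀ k : Fin 3, (e₁ ⬝ᵥ w k)^2 + (e₂ ⬝ᵥ w k)^2 ≤ w k ⬝ᵥ w k :=
    fun k => aux_bessel e₁ e₂ (w k) he11 he22 he12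
  have hA2 := hAj 2 (by decide)
  have hB2 := hBj 2 (by decide)
  have hA01 : 2 - 8*s ≤ e₁ ⬝ᵥ w 0 - e₁ ⬝ᵥ w 1 := by linarith only [hA2, hB2]
  have hA01sq : (2-8*s)^2 ≤ (e₁ ⬝ᵥ w 0 - e₁ ⬝ᵥ w 1)^2 := by
    have h28 : (0:ℝ) ≤ 2 - 8*s := by linarith only [hssmall, hs0]
    exact pow_le_pow_left₀ h28 hA01 2
  intro i
  have h16 : (16*(d:ℝ)^(-(1:ℝ)/20))^2 = 256*s := by
    calc (16*(d:ℝ)^(-(1:ℝ)/20))^2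
        = 256*((d:ℝ)^(-(1:ℝ)/20)*(d:ℝ)^(-(1:ℝ)/20)) := by ring
      _ = 256*s := by
          rw [hPmul, show (-(1:ℝ)/20 + -(1:ℝ)/20) = -(1:ℝ)/10 by norm_num, hsdef]
  refine abs_le_of_sq_le_sq ?_ (by positivity)
  rw [h16]
  rcases hfin3 i with rfl | rfl | rfl <;>
    linarith only [hbes 0, hbes 1, hbes 2, hT, hA01sq, hs0, hssmall, sq_nonneg s,
      sq_nonneg (e₁ ⬝ᵥ w 0 + e₁ ⬝ᵥ w 1), sq_nonneg (e₁ ⬝ᵥ w 2), sq_nonneg (e₂ ⬝ᵥ w 0),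
      sq_nonneg (e₂ ⬝ᵥ w 1), sq_nonneg (e₂ ⬝ᵥ w 2)]
end
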